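/- arXiv:1310.4127 — 10 statements merged into one kernel-verified Lean document; each statement's English description precedes it below -/
import Mathlib

section
/- If X is a hypergeometric random variable with parameters (n, m, r) (i.e., X counts the number of marked elements when r elements are drawn without replacement from a population of size n containing m marked elements) with expectation μ = rm/n, then for any 0 < δ ≤ 1, Pr[X ≥ (1+δ)μ] ≤ exp(−μδ²/3). -/
/-!
Chernoff's method: for `λ ≥ 0`, `Pr[X ≥ a] ≤ e^{-λa} E[e^{λX}]`. Writing `e^λ = 1 + t` and expanding
`(1 + t)^X = ∑ₖ C(X, k) tᵏ`, the binomial moments of `X ~ HG(n, m, r)` are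
`E[C(X, k)] = C(r, k) C(m, k) / C(n, k) ≤ C(r, k) (m/n)ᵏ`, the binomial moments of `Bin(r, m/n)`, so
`E[e^{λX}] ≤ (1 + t m/n)^r ≤ exp(t μ)`. With `λ = log (1 + δ)` the bound becomes
`exp(μ (δ - (1 + δ) log (1 + δ)))`, and `log (1 + δ) ≥ 2δ/(2 + δ)` bounds the exponent by `-μδ²/3`.
-/

open Finset Real

theorem Nat.choose_mul_pow_le_choose_mul_pow {m n : ℕ} (h : m ≤ n) :
    ∀ k, m.choose k * n ^ k ≤ n.choose k * m ^ k
  | 0 => by simp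
  | k + 1 => by
    have hstep : (m - k) * n ≤ (n - k) * m := by
      rw [Nat.sub_mul, Nat.sub_mul, Nat.mul_comm n m]
      exact Nat.sub_le_sub_left (Nat.mul_le_mul_left k h) _
    refine Nat.le_of_mul_le_mul_right ?_ k.succ_pos
    calc m.choose (k + 1) * n ^ (k + 1) * (k + 1)
        = m.choose (k + 1) * (k + 1) * n ^ k * n := by ring
      _ = m.choose k * n ^ k * ((m - k) * n) := by rw [Nat.choose_succ_right_eq]; ring
      _ ≤ n.choose k * m ^ k * ((n - k) * m) :=
          Nat.mul_le_mul (choose_mul_pow_le_choose_mul_pow h k) hstep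
      _ = n.choose (k + 1) * (k + 1) * m ^ k * m := by rw [Nat.choose_succ_right_eq]; ring
      _ = n.choose (k + 1) * m ^ (k + 1) * (k + 1) := by ring

theorem choose_le_choose_mul_div_pow {m n : ℕ} (h : m ≤ n) (k : ℕ) :
    (m.choose k : ℝ) ≤ n.choose k * ((m : ℝ) / n) ^ k := by
  rcases n.eq_zero_or_pos with rfl | hn
  · obtain rfl : m = 0 := Nat.le_zero.mp h
    cases k <;> simp
  rw [div_pow, mul_div_assoc', le_div_iff₀ (by positivity)]
  exact_mod_cast Nat.choose_mul_pow_le_choose_mul_pow h k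

-- Both sides count the pairs (`r`-subset, `k`-subset of its marked elements).
theorem Nat.sum_range_choose_mul_choose_mul_choose (m b : ℕ) {r k : ℕ} (hk : k ≤ r) :
    ∑ j ∈ range (r + 1), m.choose j * b.choose (r - j) * j.choose k
      = m.choose k * (m + b - k).choose (r - k) := by
  rcases lt_or_ge m k with hmk | hkm
  · rw [Nat.choose_eq_zero_of_lt hmk, zero_mul]
    refine sum_eq_zero fun j _ => ?_
    rcases lt_or_ge j k with hjk | hkj
    · rw [Nat.choose_eq_zero_of_lt hjk, mul_zero]
    · rw [Nat.choose_eq_zero_of_lt (hmk.trans_le hkj), zero_mul, zero_mul]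
  have hsplit : r + 1 = k + (r - k + 1) := by omega
  rw [hsplit, sum_range_add, sum_eq_zero (fun j hj => by
    rw [Nat.choose_eq_zero_of_lt (mem_range.mp hj), mul_zero]), zero_add]
  have hb : m + b - k = (m - k) + b := by omega
  rw [hb, Nat.add_choose_eq, Nat.sum_antidiagonal_eq_sum_range_succ_mk, mul_sum]
  refine sum_congr rfl fun i _ => ?_
  have hri : r - (k + i) = r - k - i := by omega
  rw [hri, mul_right_comm, Nat.choose_mul (by omega), Nat.add_sub_cancel_left]
  ring

theorem sum_range_choose_mul_choose_mul_one_add_pow {R : Type*} [CommSemiring R]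
    (m b r : ℕ) (t : R) :
    ∑ j ∈ range (r + 1), (m.choose j * b.choose (r - j) : R) * (1 + t) ^ j
      = ∑ k ∈ range (r + 1), (m.choose k * (m + b - k).choose (r - k) : R) * t ^ k := by
  have hbinom : ∀ j ∈ range (r + 1),
      (1 + t) ^ j = ∑ k ∈ range (r + 1), (j.choose k : R) * t ^ k := by
    intro j hj
    calc (1 + t) ^ j = ∑ k ∈ range (j + 1), (j.choose k : R) * t ^ k := by
          rw [add_comm, add_pow]; simp [mul_comm]
      _ = ∑ k ∈ range (r + 1), (j.choose k : R) * t ^ k :=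
          sum_subset (range_subset_range.mpr (by simpa using hj)) fun k _ hk => by
            rw [Nat.choose_eq_zero_of_lt (by simpa using hk), Nat.cast_zero, zero_mul]
  rw [sum_congr rfl fun j hj => by rw [hbinom j hj, mul_sum], sum_comm]
  refine sum_congr rfl fun k hk => ?_
  simp_rw [← mul_assoc]
  rw [← sum_mul]
  congr 1
  exact_mod_cast congrArg (Nat.cast : ℕ → R)
    (Nat.sum_range_choose_mul_choose_mul_choose m b (mem_range_succ_iff.mp hk))

noncomputable def hypergeometricPMF (n m r j : ℕ) : ℝ :=
  m.choose j * (n - m).choose (r - j) / n.choose r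

theorem hypergeometricPMF_nonneg (n m r j : ℕ) : 0 ≤ hypergeometricPMF n m r j := by
  unfold hypergeometricPMF; positivity

theorem sum_hypergeometricPMF_mul_one_add_pow_le {n m : ℕ} (hm : m ≤ n) (r : ℕ) {t : ℝ}
    (ht : 0 ≤ t) :
    ∑ j ∈ range (r + 1), hypergeometricPMF n m r j * (1 + t) ^ j ≤ (1 + t * m / n) ^ r := by
  simp only [hypergeometricPMF, div_mul_eq_mul_div, ← sum_div]
  refine div_le_of_le_mul₀ (Nat.cast_nonneg _) (by positivity) ?_
  rw [sum_range_choose_mul_choose_mul_one_add_pow, Nat.add_sub_cancel' hm, add_comm (1 : ℝ),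
    add_pow, sum_mul]
  refine sum_le_sum fun k hk => ?_
  have hkr : k ≤ r := mem_range_succ_iff.mp hk
  have hchoose : (n.choose r * r.choose k : ℝ) = n.choose k * (n - k).choose (r - k) := by
    exact_mod_cast Nat.choose_mul (n := n) hkr
  calc (m.choose k * (n - k).choose (r - k) : ℝ) * t ^ k
      ≤ (n.choose k * ((m : ℝ) / n) ^ k) * (n - k).choose (r - k) * t ^ k := by
        gcongr; exact choose_le_choose_mul_div_pow hm k
    _ = (t * m / n) ^ k * 1 ^ (r - k) * r.choose k * n.choose r := by
        rw [mul_right_comm _ _ ((n - k).choose (r - k) : ℝ), ← hchoose]; ring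

theorem sum_hypergeometricPMF_mul_exp_le {n m : ℕ} (hm : m ≤ n) (r : ℕ) {l : ℝ} (hl : 0 ≤ l) :
    ∑ j ∈ range (r + 1), hypergeometricPMF n m r j * exp (l * j)
      ≤ exp ((exp l - 1) * (r * m / n)) := by
  have ht : 0 ≤ exp l - 1 := by linarith [one_le_exp hl]
  have hexp (j : ℕ) : exp (l * j) = (1 + (exp l - 1)) ^ j := by
    rw [add_sub_cancel, mul_comm, exp_nat_mul]
  simp only [hexp]
  calc _ ≤ (1 + (exp l - 1) * m / n) ^ r := sum_hypergeometricPMF_mul_one_add_pow_le hm r ht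
    _ ≤ exp ((exp l - 1) * m / n) ^ r :=
        pow_le_pow_left₀ (by positivity) (by linarith [add_one_le_exp ((exp l - 1) * m / n)]) r
    _ = exp ((exp l - 1) * (r * m / n)) := by rw [← exp_nat_mul]; ring_nf

theorem sum_ite_le_exp_mul_sum_mul_exp {ι : Type*} (s : Finset ι) {p : ι → ℝ}
    (hp : ∀ i ∈ s, 0 ≤ p i) (f : ι → ℝ) (a : ℝ) {t : ℝ} (ht : 0 ≤ t) :
    ∑ i ∈ s, (if a ≤ f i then p i else 0) ≤ exp (-(t * a)) * ∑ i ∈ s, p i * exp (t * f i) := by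
  rw [mul_sum]
  refine sum_le_sum fun i hi => ?_
  have htilt : exp (-(t * a)) * (p i * exp (t * f i)) = p i * exp (t * (f i - a)) := by
    rw [mul_left_comm, ← exp_add]; ring_nf
  rw [htilt]
  split_ifs with hai
  · exact le_mul_of_one_le_right (hp i hi) (one_le_exp (by nlinarith))
  · exact mul_nonneg (hp i hi) (exp_nonneg _)

theorem self_sub_one_add_mul_log_one_add_le {δ : ℝ} (h0 : 0 ≤ δ) (h1 : δ ≤ 1) :
    δ - (1 + δ) * log (1 + δ) ≤ -(δ ^ 2) / 3 := by
  calc δ - (1 + δ) * log (1 + δ) ≤ δ - (1 + δ) * (2 * δ / (δ + 2)) := by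
        gcongr; exact le_log_one_add_of_nonneg h0
    _ = -(δ ^ 2 / (δ + 2)) := by field_simp; ring
    _ ≤ -(δ ^ 2) / 3 := by rw [neg_div]; gcongr; linarith

theorem stmt_0_general (n m r : ℕ) (hm : m ≤ n)
    (δ : ℝ) (hδ0 : 0 < δ) (hδ1 : δ ≤ 1) :
    (∑ j ∈ Finset.range (r + 1),
        if (1 + δ) * ((r : ℝ) * m / n) ≤ (j : ℝ) then
          ((m.choose j : ℝ) * ((n - m).choose (r - j) : ℝ) / (n.choose r : ℝ))
        else 0)
      ≤ Real.exp (-(((r : ℝ) * m / n) * δ ^ 2) / 3) := by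
  set μ : ℝ := r * m / n
  have hl : 0 ≤ log (1 + δ) := log_nonneg (by linarith)
  have hexp_log : exp (log (1 + δ)) - 1 = δ := by rw [exp_log (by linarith), add_sub_cancel_left]
  calc _ ≤ exp (-(log (1 + δ) * ((1 + δ) * μ))) *
          ∑ j ∈ range (r + 1), hypergeometricPMF n m r j * exp (log (1 + δ) * j) :=
        sum_ite_le_exp_mul_sum_mul_exp _ (fun j _ => hypergeometricPMF_nonneg n m r j) _ _ hl
    _ ≤ exp (-(log (1 + δ) * ((1 + δ) * μ))) * exp (δ * μ) := by
        gcongr; simpa only [hexp_log] using sum_hypergeometricPMF_mul_exp_le hm r hl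
    _ = exp (μ * (δ - (1 + δ) * log (1 + δ))) := by rw [← exp_add]; ring_nf
    _ ≤ exp (μ * (-(δ ^ 2) / 3)) := by
        gcongr; exact self_sub_one_add_mul_log_one_add_le hδ0.le hδ1
    _ = exp (-(μ * δ ^ 2) / 3) := by ring_nf

/-- Hypergeometric tail bound (upper, Chernoff-type): for `X ~ HG(n,m,r)` with
expectation `μ = r*m/n`, and any `0 < δ ≤ 1`, `Pr[X ≥ (1+δ)μ] ≤ exp(-μδ²/3)`. -/
theorem stmt_0 (n m r : ℕ) (hm : m ≤ n) (hr : r ≤ n) (hn : 0 < n)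
    (δ : ℝ) (hδ0 : 0 < δ) (hδ1 : δ ≤ 1) :
    (∑ j ∈ Finset.range (r + 1),
        if (1 + δ) * ((r : ℝ) * m / n) ≤ (j : ℝ) then
          ((m.choose j : ℝ) * ((n - m).choose (r - j) : ℝ) / (n.choose r : ℝ))
        else 0)
      ≤ Real.exp (-(((r : ℝ) * m / n) * δ ^ 2) / 3) :=
  stmt_0_general n m r hm δ hδ0 hδ1
end

section
/- If X is a hypergeometric random variable with parameters (n, m, r) with expectation μ = rm/n, then for any 0 < δ < 1, Pr[X ≤ (1−δ)μ] ≤ exp(−μδ²/2). -/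
/-!
Chernoff's method with `x = 1 - δ`: `Pr[X ≤ (1 - δ)μ] ≤ x^(-(1 - δ)μ) 𝔼[x^X]`. Drawing the
sample one element at a time, and using that `X` and `x^X` are negatively correlated (Chebyshev's
sum inequality), each draw multiplies `𝔼[x^X]` by at most `1 - δ m/n`, its value for a draw with
replacement; hence `𝔼[x^X] ≤ (1 - δ m/n)^r ≤ exp(-δμ)`. It remains to use
`δ + (1 - δ) log (1 - δ) ≥ δ²/2`.
-/

open Finset Real

theorem AntivaryOn.weighted_card_mul_sum_le_sum_mul_sum {ι : Type*} {s : Finset ι}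
    {w f g : ι → ℝ} (hw : ∀ i ∈ s, 0 ≤ w i) (hfg : AntivaryOn f g s) :
    (∑ i ∈ s, w i) * ∑ i ∈ s, w i * (f i * g i) ≤
      (∑ i ∈ s, w i * f i) * ∑ i ∈ s, w i * g i := by
  have hpairs : ∑ i ∈ s, ∑ j ∈ s, w i * w j * ((f j - f i) * (g j - g i)) ≤ 0 :=
    sum_nonpos fun i hi => sum_nonpos fun j hj =>
      mul_nonpos_of_nonneg_of_nonpos (mul_nonneg (hw i hi) (hw j hj))
        (hfg.sub_mul_sub_nonpos hi hj)
  have hexpand : ∑ i ∈ s, ∑ j ∈ s, w i * w j * ((f j - f i) * (g j - g i)) =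
      (∑ i ∈ s, w i) * (∑ i ∈ s, w i * (f i * g i)) + (∑ i ∈ s, w i * (f i * g i)) * ∑ i ∈ s, w i
        - (∑ i ∈ s, w i * f i) * (∑ i ∈ s, w i * g i)
        - (∑ i ∈ s, w i * g i) * ∑ i ∈ s, w i * f i := by
    simp only [sum_mul_sum, ← sum_add_distrib, ← sum_sub_distrib]
    exact sum_congr rfl fun i _ => sum_congr rfl fun j _ => by ring
  linarith

/-- `hypergeomSum a b r f = C(a + b, r) · 𝔼[f X]` for `X ~ HG(a + b, a, r)`. -/
noncomputable def hypergeomSum (a b r : ℕ) (f : ℕ → ℝ) : ℝ :=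
  ∑ j ∈ range (r + 1), (a.choose j * b.choose (r - j) : ℝ) * f j

theorem hypergeomSum_one (a b r : ℕ) :
    hypergeomSum a b r (fun _ => 1) = (a + b).choose r := by
  rw [hypergeomSum, Nat.add_choose_eq, Nat.sum_antidiagonal_eq_sum_range_succ_mk]
  push_cast
  simp

theorem hypergeomSum_eq_zero_of_lt {a b r : ℕ} (h : a + b < r) (f : ℕ → ℝ) :
    hypergeomSum a b r f = 0 := by
  refine sum_eq_zero fun j _ => ?_
  rcases le_or_gt j a with hj | hj
  · simp [Nat.choose_eq_zero_of_lt (show b < r - j by omega)]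
  · simp [Nat.choose_eq_zero_of_lt hj]

theorem Nat.cast_choose_mul_sub {R : Type*} [CommRing R] (n k : ℕ) :
    (n.choose k : R) * (n - k) = n.choose (k + 1) * (k + 1) := by
  rcases le_or_gt k n with hk | hk
  · have h := congrArg (Nat.cast (R := R)) (Nat.choose_succ_right_eq n k)
    push_cast [Nat.cast_sub hk] at h
    exact h.symm
  · simp [Nat.choose_eq_zero_of_lt hk, Nat.choose_eq_zero_of_lt (hk.trans k.lt_succ_self)]

theorem add_mul_hypergeomSum_id (a b r : ℕ) :
    (a + b) * hypergeomSum a b r (fun j => j) = r * a * (a + b).choose r := by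
  rcases a with _ | a
  · have h : hypergeomSum 0 b r (fun j => j) = 0 := sum_eq_zero fun j _ => by cases j <;> simp
    simp [h]
  rcases r with _ | r
  · simp [hypergeomSum]
  have hshift : hypergeomSum (a + 1) b (r + 1) (fun j => j) =
      (a + 1) * hypergeomSum a b r (fun _ => 1) := by
    rw [hypergeomSum, sum_range_succ', hypergeomSum, mul_sum]
    simp only [CharP.cast_eq_zero, mul_zero, add_zero, Nat.add_sub_add_right]
    refine sum_congr rfl fun k _ => ?_
    have h := congrArg (Nat.cast (R := ℝ)) (Nat.add_one_mul_choose_eq a k)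
    push_cast at h ⊢
    linear_combination -(b.choose (r - k) : ℝ) * h
  have hpascal := congrArg (Nat.cast (R := ℝ)) (Nat.add_one_mul_choose_eq (a + b) r)
  rw [hshift, hypergeomSum_one, Nat.add_right_comm a 1 b]
  push_cast at hpascal ⊢
  linear_combination (a + 1 : ℝ) * hpascal

/-- Count `(r + 1)`-subsets with a distinguished element, according to whether that element is
marked. -/
theorem succ_mul_hypergeomSum_succ (a b r : ℕ) (f : ℕ → ℝ) :
    (r + 1) * hypergeomSum a b (r + 1) f =
      hypergeomSum a b r (fun i => (a - i) * f (i + 1) + (b + i - r) * f i) := by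
  have hmarked :
      ∑ j ∈ range (r + 1 + 1), (j : ℝ) * (a.choose j * b.choose (r + 1 - j) * f j) =
      ∑ i ∈ range (r + 1), (a.choose i * b.choose (r - i) : ℝ) * ((a - i) * f (i + 1)) := by
    rw [sum_range_succ']
    simp only [CharP.cast_eq_zero, zero_mul, add_zero, Nat.add_sub_add_right]
    refine sum_congr rfl fun i _ => ?_
    push_cast
    linear_combination
      -(b.choose (r - i) * f (i + 1) : ℝ) * Nat.cast_choose_mul_sub (R := ℝ) a i
  have hunmarked : ∑ j ∈ range (r + 1 + 1),
      ((r : ℝ) + 1 - j) * (a.choose j * b.choose (r + 1 - j) * f j) =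
      ∑ i ∈ range (r + 1), (a.choose i * b.choose (r - i) : ℝ) * ((b + i - r) * f i) := by
    rw [sum_range_succ]
    simp only [Nat.cast_add, Nat.cast_one, sub_self, zero_mul, add_zero]
    refine sum_congr rfl fun i hi => ?_
    have hir : i ≤ r := Nat.lt_succ_iff.mp (mem_range.mp hi)
    rw [show r + 1 - i = r - i + 1 by omega]
    have h := Nat.cast_choose_mul_sub (R := ℝ) b (r - i)
    push_cast [Nat.cast_sub hir] at h ⊢
    linear_combination -(a.choose i * f i : ℝ) * h
  calc (r + 1) * hypergeomSum a b (r + 1) f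
      = ∑ j ∈ range (r + 1 + 1), ((j : ℝ) * (a.choose j * b.choose (r + 1 - j) * f j)
          + ((r : ℝ) + 1 - j) * (a.choose j * b.choose (r + 1 - j) * f j)) := by
        rw [hypergeomSum, mul_sum]
        exact sum_congr rfl fun j _ => by ring
    _ = _ := by
        rw [sum_add_distrib, hmarked, hunmarked, hypergeomSum, ← sum_add_distrib]
        simp only [mul_add]

theorem add_mul_hypergeomSum_mul_pow_le {a b r : ℕ} (hr : r ≤ a + b) {x : ℝ} (hx0 : 0 ≤ x)
    (hx1 : x ≤ 1) :
    (a + b) * hypergeomSum a b r (fun i => i * x ^ i) ≤ r * a * hypergeomSum a b r (x ^ ·) := by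
  have hchoose : (0 : ℝ) < (a + b).choose r := by exact_mod_cast Nat.choose_pos hr
  have hcheb : hypergeomSum a b r (fun _ => 1) * hypergeomSum a b r (fun i => i * x ^ i) ≤
      hypergeomSum a b r (fun i => i) * hypergeomSum a b r (x ^ ·) := by
    simpa only [hypergeomSum, mul_one] using AntivaryOn.weighted_card_mul_sum_le_sum_mul_sum
      (s := range (r + 1)) (w := fun j => (a.choose j * b.choose (r - j) : ℝ))
      (f := fun i => (i : ℝ)) (g := fun i => x ^ i) (fun j _ => by positivity)
      ((Nat.mono_cast.antivary fun _ _ hij => pow_le_pow_of_le_one hx0 hx1 hij).antivaryOn _)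
  rw [hypergeomSum_one] at hcheb
  refine le_of_mul_le_mul_left ?_ hchoose
  calc ((a + b).choose r : ℝ) * ((a + b) * hypergeomSum a b r (fun i => i * x ^ i))
      = (a + b) * (((a + b).choose r : ℝ) * hypergeomSum a b r (fun i => i * x ^ i)) := by ring
    _ ≤ (a + b) * (hypergeomSum a b r (fun i => i) * hypergeomSum a b r (x ^ ·)) := by gcongr
    _ = ((a + b).choose r : ℝ) * (r * a * hypergeomSum a b r (x ^ ·)) := by
        rw [← mul_assoc, add_mul_hypergeomSum_id]; ring

theorem hypergeomSum_pow_le (a b r : ℕ) {x : ℝ} (hx0 : 0 ≤ x) (hx1 : x ≤ 1) :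
    hypergeomSum a b r (x ^ ·) ≤ (a + b).choose r * (1 - (1 - x) * (a / (a + b))) ^ r := by
  rcases lt_or_ge (a + b) r with hr | hr
  · simp [hypergeomSum_eq_zero_of_lt hr, Nat.choose_eq_zero_of_lt hr]
  set c := 1 - (1 - x) * ((a : ℝ) / (a + b)) with hc
  have hc0 : 0 ≤ c := by
    have : (a : ℝ) / (a + b) ≤ 1 := div_le_one_of_le₀ (by simp) (by positivity)
    have : (1 - x) * ((a : ℝ) / (a + b)) ≤ 1 := mul_le_one₀ (by linarith) (by positivity) this
    linarith
  induction r with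
  | zero => simp [hypergeomSum]
  | succ r ih =>
    have hn : (0 : ℝ) < a + b := by exact_mod_cast (by omega : 0 < a + b)
    have hstep : (r + 1) * hypergeomSum a b (r + 1) (x ^ ·) =
        (a + b - r - (1 - x) * a) * hypergeomSum a b r (x ^ ·) +
          (1 - x) * hypergeomSum a b r (fun i => i * x ^ i) := by
      rw [succ_mul_hypergeomSum_succ]
      simp only [hypergeomSum, mul_sum, ← sum_add_distrib]
      exact sum_congr rfl fun i _ => by ring
    have hcorr : hypergeomSum a b r (fun i => i * x ^ i) ≤
        r * a * hypergeomSum a b r (x ^ ·) / (a + b) := by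
      rw [le_div_iff₀ hn, mul_comm]
      exact add_mul_hypergeomSum_mul_pow_le (by omega) hx0 hx1
    have hnr : (0 : ℝ) ≤ a + b - r := by
      rw [sub_nonneg]; exact_mod_cast (by omega : r ≤ a + b)
    refine le_of_mul_le_mul_left ?_ (by positivity : (0 : ℝ) < r + 1)
    calc (r + 1) * hypergeomSum a b (r + 1) (x ^ ·)
        ≤ (a + b - r - (1 - x) * a) * hypergeomSum a b r (x ^ ·) +
          (1 - x) * (r * a * hypergeomSum a b r (x ^ ·) / (a + b)) := by
          rw [hstep]; gcongr
      _ = (a + b - r) * c * hypergeomSum a b r (x ^ ·) := by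
          rw [hc]; field_simp; ring
      _ ≤ (a + b - r) * c * ((a + b).choose r * c ^ r) := by
          gcongr; exact ih (by omega)
      _ = (r + 1) * ((a + b).choose (r + 1) * c ^ (r + 1)) := by
          have h := Nat.cast_choose_mul_sub (R := ℝ) (a + b) r
          push_cast at h
          rw [pow_succ]
          linear_combination c ^ r * c * h

theorem sum_ite_le_le_rpow_neg_mul_sum_mul_pow {s : Finset ℕ} {w : ℕ → ℝ}
    (hw : ∀ j ∈ s, 0 ≤ w j) {x : ℝ} (hx0 : 0 < x) (hx1 : x ≤ 1) (k : ℝ) :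
    (∑ j ∈ s, if (j : ℝ) ≤ k then w j else 0) ≤ x ^ (-k) * ∑ j ∈ s, w j * x ^ j := by
  rw [mul_sum]
  refine sum_le_sum fun j hj => ?_
  have hterm_nonneg : 0 ≤ x ^ (-k) * (w j * x ^ j) := by have := hw j hj; positivity
  split_ifs with hjk
  · have hone : 1 ≤ x ^ (-k) * x ^ j := by
      rw [← rpow_natCast, ← rpow_add hx0]
      exact one_le_rpow_of_pos_of_le_one_of_nonpos hx0 hx1 (by linarith)
    nlinarith [hw j hj]
  · exact hterm_nonneg

theorem Real.sq_div_two_le_add_one_sub_mul_log_one_sub {δ : ℝ} (h0 : 0 ≤ δ) (h1 : δ < 1) :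
    δ ^ 2 / 2 ≤ δ + (1 - δ) * log (1 - δ) := by
  have hu : 0 < 1 - δ := by linarith
  have hsinh : sinh (log (1 - δ)) ≤ log (1 - δ) := by
    have := self_le_sinh_iff.2 (neg_nonneg.2 (log_nonpos hu.le (by linarith)))
    rw [sinh_neg] at this
    linarith
  rw [sinh_log hu] at hsinh
  have := mul_le_mul_of_nonneg_left hsinh hu.le
  field_simp at this
  nlinarith

theorem one_sub_rpow_mul_one_sub_mul_pow_le_exp {δ p : ℝ} (hδ0 : 0 ≤ δ) (hδ1 : δ < 1)
    (hp0 : 0 ≤ p) (hp1 : p ≤ 1) (r : ℕ) :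
    (1 - δ) ^ (-((1 - δ) * (r * p))) * (1 - δ * p) ^ r ≤ exp (-(r * p * δ ^ 2) / 2) := by
  have hlog := Real.sq_div_two_le_add_one_sub_mul_log_one_sub hδ0 hδ1
  calc (1 - δ) ^ (-((1 - δ) * (r * p))) * (1 - δ * p) ^ r
      ≤ exp (log (1 - δ) * -((1 - δ) * (r * p))) * exp (-(δ * p)) ^ r := by
        rw [← rpow_def_of_pos (by linarith)]
        gcongr
        · nlinarith
        · linarith [add_one_le_exp (-(δ * p))]
    _ = exp (-(r * p * (δ + (1 - δ) * log (1 - δ)))) := by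
        rw [← exp_nat_mul, ← exp_add]; ring_nf
    _ ≤ exp (-(r * p * δ ^ 2) / 2) := by
        have hμ : (0 : ℝ) ≤ r * p := by positivity
        exact exp_le_exp.2 (by nlinarith)

theorem stmt_1_general (n m r : ℕ) (hm : m ≤ n)
    (δ : ℝ) (hδ0 : 0 < δ) (hδ1 : δ < 1) :
    (∑ j ∈ Finset.range (r + 1),
        if (j : ℝ) ≤ (1 - δ) * ((r : ℝ) * m / n) then
          ((m.choose j : ℝ) * ((n - m).choose (r - j) : ℝ) / (n.choose r : ℝ))
        else 0)
      ≤ Real.exp (-(((r : ℝ) * m / n) * δ ^ 2) / 2) := by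
  obtain ⟨b, rfl⟩ := Nat.exists_eq_add_of_le hm
  rw [Nat.add_sub_cancel_left]
  have hp1 : (m : ℝ) / ↑(m + b) ≤ 1 := div_le_one_of_le₀ (by simp) (by positivity)
  calc _ ≤ (1 - δ) ^ (-((1 - δ) * (r * m / ↑(m + b)))) *
          ∑ j ∈ range (r + 1),
            (m.choose j * b.choose (r - j) / (m + b).choose r : ℝ) * (1 - δ) ^ j :=
        sum_ite_le_le_rpow_neg_mul_sum_mul_pow (fun j _ => by positivity) (by linarith)
          (by linarith) _
    _ = (1 - δ) ^ (-((1 - δ) * (r * (m / ↑(m + b))))) *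
          (hypergeomSum m b r ((1 - δ) ^ ·) / (m + b).choose r) := by
        rw [hypergeomSum, sum_div, mul_div_assoc]
        congr 1
        exact sum_congr rfl fun j _ => by ring
    _ ≤ (1 - δ) ^ (-((1 - δ) * (r * (m / ↑(m + b))))) * (1 - δ * (m / ↑(m + b))) ^ r := by
        gcongr
        refine div_le_of_le_mul₀ (by positivity)
          (pow_nonneg (sub_nonneg.2 (mul_le_one₀ hδ1.le (by positivity) hp1)) r) ?_
        have := hypergeomSum_pow_le m b r (by linarith : 0 ≤ 1 - δ) (by linarith)
        push_cast
        rwa [sub_sub_cancel, mul_comm] at this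
    _ ≤ Real.exp (-((r * m / ↑(m + b)) * δ ^ 2) / 2) := by
        rw [mul_div_assoc]
        exact one_sub_rpow_mul_one_sub_mul_pow_le_exp hδ0.le hδ1 (by positivity) hp1 r

/-- Hypergeometric lower-tail bound: for `X ~ HG(n,m,r)` with expectation
`μ = r*m/n`, and any `0 < δ < 1`, `Pr[X ≤ (1-δ)μ] ≤ exp(-μδ²/2)`. -/
theorem stmt_1 (n m r : ℕ) (hm : m ≤ n) (hr : r ≤ n) (hn : 0 < n)
    (δ : ℝ) (hδ0 : 0 < δ) (hδ1 : δ < 1) :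
    (∑ j ∈ Finset.range (r + 1),
        if (j : ℝ) ≤ (1 - δ) * ((r : ℝ) * m / n) then
          ((m.choose j : ℝ) * ((n - m).choose (r - j) : ℝ) / (n.choose r : ℝ))
        else 0)
      ≤ Real.exp (-(((r : ℝ) * m / n) * δ ^ 2) / 2) :=
  stmt_1_general n m r hm δ hδ0 hδ1
end

section
/- If X is a hypergeometric random variable with parameters (n, m, r) with expectation μ = rm/n, then for any δ > 2e − 1, Pr[X > (1+δ)μ] < (1/2)^((1+δ)μ). -/
/-!
Writing `μ = r m / n`, each point probability is dominated by the Poisson-type bound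
`Pr[X = j] ≤ μ^j / j!`, because `C(m,j) / C(n,j) ≤ (m/n)^j`. Together with `j^j ≤ j! e^(j-1)`
this gives `Pr[X = j] ≤ (e μ / j)^j / e ≤ 2^(-j) / e` as soon as `j ≥ 2eμ`, which holds for every
`j > (1+δ)μ`. Summing the geometric tail over `j ≥ (1+δ)μ` costs a factor `2`, and `2/e < 1`.
-/

open Finset Real
open scoped Nat

namespace Nat

theorem pow_mul_descFactorial_le {m n : ℕ} (hmn : m ≤ n) (j : ℕ) :
    n ^ j * m.descFactorial j ≤ m ^ j * n.descFactorial j := by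
  induction j with
  | zero => simp
  | succ j ih =>
    have step : n * (m - j) ≤ m * (n - j) := by
      rw [Nat.mul_sub, Nat.mul_sub, Nat.mul_comm n m]
      exact Nat.sub_le_sub_left (Nat.mul_le_mul_right j hmn) _
    calc n ^ (j + 1) * m.descFactorial (j + 1)
        = (n * (m - j)) * (n ^ j * m.descFactorial j) := by
          rw [descFactorial_succ, pow_succ]; ring
      _ ≤ (m * (n - j)) * (m ^ j * n.descFactorial j) := Nat.mul_le_mul step ih
      _ = m ^ (j + 1) * n.descFactorial (j + 1) := by
          rw [descFactorial_succ, pow_succ]; ring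

theorem pow_mul_choose_le {m n : ℕ} (hmn : m ≤ n) (j : ℕ) :
    n ^ j * m.choose j ≤ m ^ j * n.choose j := by
  have h := pow_mul_descFactorial_le hmn j
  rw [descFactorial_eq_factorial_mul_choose, descFactorial_eq_factorial_mul_choose,
    Nat.mul_left_comm, Nat.mul_left_comm (m ^ j)] at h
  exact Nat.le_of_mul_le_mul_left h (factorial_pos j)

theorem pow_mul_choose_mul_choose_mul_factorial_le {n m r j : ℕ} (hm : m ≤ n) (hj : j ≤ r) :
    n ^ j * (m.choose j * (n - m).choose (r - j)) * j ! ≤ (r * m) ^ j * n.choose r := by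
  rcases lt_or_ge m j with hmj | hjm
  · simp [choose_eq_zero_of_lt hmj]
  calc n ^ j * (m.choose j * (n - m).choose (r - j)) * j !
      = (n ^ j * m.choose j) * (n - m).choose (r - j) * j ! := by ring
    _ ≤ (m ^ j * n.choose j) * (n - j).choose (r - j) * j ! := by
        gcongr ?_ * ?_ * _
        · exact pow_mul_choose_le hm j
        · exact choose_le_choose _ (Nat.sub_le_sub_left hjm n)
    _ = m ^ j * n.choose r * (j ! * r.choose j) := by
        rw [mul_assoc (m ^ j), ← choose_mul hj]; ring
    _ ≤ m ^ j * n.choose r * r ^ j := by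
        rw [← descFactorial_eq_factorial_mul_choose]
        exact Nat.mul_le_mul_left _ (descFactorial_le_pow r j)
    _ = (r * m) ^ j * n.choose r := by ring

end Nat

theorem hypergeometric_le_pow_div_factorial {n m r j : ℕ} (hn : 0 < n) (hm : m ≤ n)
    (hr : r ≤ n) (hj : j ≤ r) :
    (m.choose j : ℝ) * (n - m).choose (r - j) / n.choose r
      ≤ ((r : ℝ) * m / n) ^ j / j ! := by
  have hchoose : (0 : ℝ) < n.choose r := by exact_mod_cast Nat.choose_pos hr
  have hnat : ((n ^ j * (m.choose j * (n - m).choose (r - j)) * j ! : ℕ) : ℝ)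
      ≤ (((r * m) ^ j * n.choose r : ℕ) : ℝ) := by
    exact_mod_cast Nat.pow_mul_choose_mul_choose_mul_factorial_le hm hj
  push_cast at hnat
  rw [div_pow, div_div, div_le_div_iff₀ hchoose (by positivity)]
  linarith

theorem succ_pow_succ_le_factorial_mul_exp_pow (k : ℕ) :
    ((k + 1 : ℕ) : ℝ) ^ (k + 1) ≤ (k + 1)! * exp 1 ^ k := by
  induction k with
  | zero => simp
  | succ k ih =>
    have hratio : ((k + 2 : ℕ) : ℝ) ^ (k + 1) ≤ exp 1 * ((k + 1 : ℕ) : ℝ) ^ (k + 1) := by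
      calc ((k + 2 : ℕ) : ℝ) ^ (k + 1)
          = (1 + ((k + 1 : ℕ) : ℝ)⁻¹) ^ (k + 1) * ((k + 1 : ℕ) : ℝ) ^ (k + 1) := by
            rw [← mul_pow]; congr 1; push_cast; field_simp; ring
        _ ≤ exp 1 * ((k + 1 : ℕ) : ℝ) ^ (k + 1) := by
            gcongr; exact one_add_inv_pow_le_exp
    calc ((k + 1 + 1 : ℕ) : ℝ) ^ (k + 1 + 1)
        = (k + 2 : ℕ) * ((k + 2 : ℕ) : ℝ) ^ (k + 1) := by rw [pow_succ']
      _ ≤ (k + 2 : ℕ) * (exp 1 * ((k + 1)! * exp 1 ^ k)) := by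
        gcongr; exact hratio.trans (by gcongr)
      _ = (k + 1 + 1)! * exp 1 ^ (k + 1) := by
        rw [Nat.factorial_succ (k + 1)]; push_cast; ring

theorem pow_div_factorial_le {x : ℝ} (hx : 0 ≤ x) {j : ℕ} (hj : 0 < j) :
    x ^ j / j ! ≤ (exp 1 * x / j) ^ j / exp 1 := by
  obtain ⟨k, rfl⟩ := Nat.exists_eq_succ_of_ne_zero hj.ne'
  have hfac : (0 : ℝ) < (k + 1)! := by positivity
  rw [div_le_div_iff₀ hfac (exp_pos 1), div_pow, mul_pow, div_mul_eq_mul_div,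
    le_div_iff₀ (by positivity)]
  calc x ^ (k + 1) * exp 1 * ((k + 1 : ℕ) : ℝ) ^ (k + 1)
      ≤ x ^ (k + 1) * exp 1 * ((k + 1)! * exp 1 ^ k) := by
        gcongr; exact succ_pow_succ_le_factorial_mul_exp_pow k
    _ = exp 1 ^ (k + 1) * x ^ (k + 1) * (k + 1)! := by ring

theorem sum_half_pow_le_two_mul_pow (s : Finset ℕ) (k : ℕ) (hs : ∀ j ∈ s, k ≤ j) :
    ∑ j ∈ s, (1 / 2 : ℝ) ^ j ≤ 2 * (1 / 2) ^ k := by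
  have hinj : Set.InjOn (· - k) s := fun i hi j hj hij => by
    have := hs i hi; have := hs j hj; simp only at hij; omega
  calc ∑ j ∈ s, (1 / 2 : ℝ) ^ j = (1 / 2) ^ k * ∑ i ∈ s.image (· - k), (1 / 2 : ℝ) ^ i := by
        rw [sum_image hinj, mul_sum]
        exact sum_congr rfl fun j hj => by rw [← pow_add, Nat.add_sub_cancel' (hs j hj)]
    _ ≤ (1 / 2) ^ k * 2 := by
        gcongr
        exact (summable_geometric_two.sum_le_tsum _ fun _ _ => by positivity).trans_eq
          tsum_geometric_two
    _ = 2 * (1 / 2) ^ k := mul_comm _ _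

theorem sum_half_pow_le_two_mul_rpow (s : Finset ℕ) (t : ℝ) (hs : ∀ j ∈ s, t ≤ j) :
    ∑ j ∈ s, (1 / 2 : ℝ) ^ j ≤ 2 * (1 / 2) ^ t := by
  calc ∑ j ∈ s, (1 / 2 : ℝ) ^ j ≤ 2 * (1 / 2) ^ ⌈t⌉₊ :=
        sum_half_pow_le_two_mul_pow s _ fun j hj => Nat.ceil_le.2 (hs j hj)
    _ ≤ 2 * (1 / 2) ^ t := by
        rw [← rpow_natCast]
        exact mul_le_mul_of_nonneg_left
          (rpow_le_rpow_of_exponent_ge (by norm_num) (by norm_num) (Nat.le_ceil t)) zero_le_two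

/-- Hypergeometric tail bound for large deviations: for `X ~ HG(n,m,r)` with
expectation `μ = r*m/n`, and any `δ > 2e - 1`, `Pr[X > (1+δ)μ] < (1/2)^((1+δ)μ)`. -/
theorem stmt_2 (n m r : ℕ) (hm : m ≤ n) (hr : r ≤ n) (hn : 0 < n)
    (δ : ℝ) (hδ : δ > 2 * Real.exp 1 - 1) :
    (∑ j ∈ Finset.range (r + 1),
        if (1 + δ) * ((r : ℝ) * m / n) < (j : ℝ) then
          ((m.choose j : ℝ) * ((n - m).choose (r - j) : ℝ) / (n.choose r : ℝ))
        else 0)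
      < ((1 : ℝ) / 2) ^ ((1 + δ) * ((r : ℝ) * m / n)) := by
  set μ : ℝ := r * m / n
  set t : ℝ := (1 + δ) * μ
  have he : 2 < exp 1 := by linarith [exp_one_gt_d9]
  have hμ : 0 ≤ μ := by positivity
  have hterm : ∀ j ∈ (range (r + 1)).filter (fun j : ℕ => t < j),
      (m.choose j : ℝ) * (n - m).choose (r - j) / n.choose r ≤ (1 / 2) ^ j / exp 1 := by
    intro j hj
    obtain ⟨hjr, htj⟩ := mem_filter.1 hj
    have hjμ : 2 * exp 1 * μ < j :=
      lt_of_le_of_lt (mul_le_mul_of_nonneg_right (by linarith) hμ) htj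
    have hj0 : (0 : ℝ) < j := lt_of_le_of_lt (by positivity) hjμ
    calc (m.choose j : ℝ) * (n - m).choose (r - j) / n.choose r ≤ μ ^ j / j ! :=
          hypergeometric_le_pow_div_factorial hn hm hr (Nat.lt_succ_iff.1 (mem_range.1 hjr))
      _ ≤ (exp 1 * μ / j) ^ j / exp 1 := pow_div_factorial_le hμ (by exact_mod_cast hj0)
      _ ≤ (1 / 2) ^ j / exp 1 := by
          gcongr ?_ ^ _ / _
          rw [div_le_iff₀ hj0]; linarith
  calc _ = ∑ j ∈ (range (r + 1)).filter (fun j : ℕ => t < j),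
          (m.choose j : ℝ) * (n - m).choose (r - j) / n.choose r := (sum_filter _ _).symm
    _ ≤ ∑ j ∈ (range (r + 1)).filter (fun j : ℕ => t < j), (1 / 2 : ℝ) ^ j / exp 1 :=
        sum_le_sum hterm
    _ ≤ 2 * (1 / 2) ^ t / exp 1 := by
        rw [← sum_div]
        gcongr
        exact sum_half_pow_le_two_mul_rpow _ t fun j hj => (mem_filter.1 hj).2.le
    _ < (1 / 2) ^ t := by
        rw [div_lt_iff₀ (exp_pos 1)]
        nlinarith [rpow_pos_of_pos (by norm_num : (0 : ℝ) < 1 / 2) t]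
end

section
/- Let Γ and Γ' be two finite subsets of a linearly ordered finite universe U with |U| = N, and let p satisfy 1 ≤ p ≤ N. For a set S ⊆ U, define Λ_S to be the list of elements of U that first enumerates the elements of S in increasing order and then the elements of U \ S in increasing order, and define Top_p(S) = {Λ_S[a] : 1 ≤ a ≤ p} ∩ S (the first min(p, |S|) elements of this list that lie in S). Then |Top_p(Γ) Δ Top_p(Γ')| ≤ 2·|Γ Δ Γ'|, where Δ denotes symmetric difference. -/
open Finset
open scoped symmDiff

/-- The list `Λ_S`: the elements of `S` in increasing order, followed by the
elements of the complement of `S` in increasing order. -/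
noncomputable def lamList {U : Type*} [Fintype U] [LinearOrder U] (S : Finset U) : List U :=
  (S.sort (· ≤ ·)) ++ ((Sᶜ : Finset U).sort (· ≤ ·))

/-- `Top_p(S)`: the first `min(p,|S|)` elements of the list `Λ_S` that lie in `S`. -/
noncomputable def topP {U : Type*} [Fintype U] [LinearOrder U] (p : ℕ) (S : Finset U) :
    Finset U :=
  ((lamList S).take p).toFinset ∩ S

/-!
`Top_p(S)` is the set of elements of `S` having fewer than `p` smaller elements in `S`. Adding
one element `x` to `S` raises these ranks by at most one, so `Top_p` can only gain `x` and lose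
the element of rank `p - 1`, if any: it changes by at most two elements. Walking from `Γ` down to
`Γ ∩ Γ'` and up to `Γ'` one element at a time gives the bound.
-/

namespace Finset

section SymmDiff

variable {α β : Type*} [DecidableEq α] [DecidableEq β]

theorem card_symmDiff_eq_card_sdiff_add_card_sdiff (s t : Finset α) :
    #(s ∆ t) = #(s \ t) + #(t \ s) := by
  rw [symmDiff_def, sup_eq_union, card_union_of_disjoint disjoint_sdiff_sdiff]

theorem card_symmDiff_le_card_symmDiff_add (s t u : Finset α) :
    #(s ∆ u) ≤ #(s ∆ t) + #(t ∆ u) :=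
  (card_le_card (symmDiff_triangle s t u)).trans (card_union_le _ _)

theorem card_symmDiff_apply_union_le (f : Finset α → Finset β) (c : ℕ)
    (hf : ∀ s x, #(f (insert x s) ∆ f s) ≤ c) (s u : Finset α) :
    #(f (s ∪ u) ∆ f s) ≤ c * #u := by
  induction u using Finset.induction_on with
  | empty => simp
  | insert a u ha ih =>
    rw [union_insert, card_insert_of_notMem ha, mul_add_one, add_comm]
    exact (card_symmDiff_le_card_symmDiff_add _ (f (s ∪ u)) _).trans (add_le_add (hf _ a) ih)

theorem card_symmDiff_apply_le_mul_card_symmDiff (f : Finset α → Finset β) (c : ℕ)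
    (hf : ∀ s x, #(f (insert x s) ∆ f s) ≤ c) (s t : Finset α) :
    #(f s ∆ f t) ≤ c * #(s ∆ t) := by
  have hs := card_symmDiff_apply_union_le f c hf (s ∩ t) (s \ t)
  have ht := card_symmDiff_apply_union_le f c hf (t ∩ s) (t \ s)
  rw [← inf_eq_inter, ← sup_eq_union, sup_inf_sdiff] at hs
  rw [← inf_eq_inter, ← sup_eq_union, sup_inf_sdiff, inf_eq_inter, inter_comm, symmDiff_comm] at ht
  calc #(f s ∆ f t) ≤ #(f s ∆ f (s ∩ t)) + #(f (s ∩ t) ∆ f t) :=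
        card_symmDiff_le_card_symmDiff_add _ _ _
    _ ≤ c * #(s \ t) + c * #(t \ s) := add_le_add hs ht
    _ = c * #(s ∆ t) := by rw [card_symmDiff_eq_card_sdiff_add_card_sdiff, mul_add]

end SymmDiff

section Rank

variable {α : Type*} [LinearOrder α]

theorem countP_sort_lt (S : Finset α) (x : α) :
    (S.sort (· ≤ ·)).countP (· < x) = #{y ∈ S | y < x} := by
  rw [Finset.filter, Finset.card, ← Multiset.countP_eq_card_filter,
    ← Finset.sort_eq (r := (· ≤ ·)), Multiset.coe_countP]

theorem card_filter_lt_lt_card_filter_lt {S : Finset α} {a b : α} (ha : a ∈ S) (hab : a < b) :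
    #{y ∈ S | y < a} < #{y ∈ S | y < b} := by
  refine card_lt_card ⟨monotone_filter_right S fun y _ (hy : y < a) => hy.trans hab, ?_⟩
  intro hsub
  simpa using hsub (mem_filter.2 ⟨ha, hab⟩)

theorem card_filter_card_filter_lt_eq_le_one (S : Finset α) (k : ℕ) :
    #{x ∈ S | #{y ∈ S | y < x} = k} ≤ 1 := by
  refine card_le_one.2 fun a ha b hb => ?_
  rw [mem_filter] at ha hb
  by_contra hne
  rcases lt_or_gt_of_ne hne with h | h
  · exact (card_filter_lt_lt_card_filter_lt ha.1 h).ne (ha.2.trans hb.2.symm)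
  · exact (card_filter_lt_lt_card_filter_lt hb.1 h).ne (hb.2.trans ha.2.symm)

theorem card_filter_insert_lt_le (S : Finset α) (x y : α) :
    #{z ∈ insert x S | z < y} ≤ #{z ∈ S | z < y} + 1 := by
  rw [filter_insert]
  split_ifs
  · exact card_insert_le _ _
  · exact Nat.le_succ _

theorem filter_card_filter_lt_insert_symmDiff_subset (S : Finset α) (x : α) (p : ℕ) :
    {y ∈ insert x S | #{z ∈ insert x S | z < y} < p} ∆ {y ∈ S | #{z ∈ S | z < y} < p} ⊆
      insert x {y ∈ S | #{z ∈ S | z < y} + 1 = p} := by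
  intro y hy
  have hmono : #{z ∈ S | z < y} ≤ #{z ∈ insert x S | z < y} :=
    card_le_card (filter_subset_filter _ (subset_insert x S))
  have hle := card_filter_insert_lt_le S x y
  simp only [mem_symmDiff, mem_filter, mem_insert] at hy ⊢
  rcases hy with ⟨⟨rfl | hyS, hlt⟩, hnot⟩ | ⟨⟨hyS, hlt⟩, hnot⟩
  · exact Or.inl rfl
  · exact absurd ⟨hyS, hmono.trans_lt hlt⟩ hnot
  · exact Or.inr ⟨hyS, by have := not_lt.1 fun h => hnot ⟨Or.inr hyS, h⟩; omega⟩

end Rank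

end Finset

theorem List.mem_take_iff_countP_lt {α : Type*} [LinearOrder α] {l : List α}
    (hl : l.Pairwise (· < ·)) (p : ℕ) (x : α) :
    x ∈ l.take p ↔ x ∈ l ∧ l.countP (· < x) < p := by
  induction l generalizing p with
  | nil => simp
  | cons a t ih =>
    have hat : ∀ y ∈ t, a < y := fun y hy => List.rel_of_pairwise_cons hl hy
    cases p with
    | zero => simp
    | succ q =>
      by_cases hxa : x = a
      · subst hxa
        have : t.countP (· < x) = 0 :=
          List.countP_eq_zero.2 fun y hy => by simpa using (hat y hy).le
        simp [this]
      · simp only [List.take_succ_cons, List.mem_cons, List.countP_cons, hxa, false_or,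
          ih hl.of_cons q]
        by_cases hxt : x ∈ t
        · simp [hxt, hat x hxt]
        · simp [hxt]

section TopP

variable {U : Type*} [Fintype U] [LinearOrder U]

theorem topP_eq_filter (p : ℕ) (S : Finset U) : topP p S = {x ∈ S | #{y ∈ S | y < x} < p} := by
  ext x
  simp only [topP, lamList, List.take_append, mem_inter, List.mem_toFinset, List.mem_append,
    mem_filter]
  have hx : x ∈ S → x ∉ (Sᶜ).sort (· ≤ ·) := by simp
  rw [List.mem_take_iff_countP_lt S.sortedLT_sort.pairwise, countP_sort_lt, mem_sort]
  grind [List.mem_of_mem_take]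

theorem card_topP_insert_symmDiff_le_two (p : ℕ) (S : Finset U) (x : U) :
    #(topP p (insert x S) ∆ topP p S) ≤ 2 := by
  rw [topP_eq_filter, topP_eq_filter]
  calc _ ≤ #(insert x {y ∈ S | #{z ∈ S | z < y} + 1 = p}) :=
        card_le_card (filter_card_filter_lt_insert_symmDiff_subset S x p)
    _ ≤ #{y ∈ S | #{z ∈ S | z < y} + 1 = p} + 1 := card_insert_le _ _
    _ ≤ 1 + 1 := by
      gcongr
      refine (card_le_card ?_).trans (card_filter_card_filter_lt_eq_le_one S (p - 1))
      exact monotone_filter_right S fun y _ (h : _ + 1 = p) => by omega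

end TopP

theorem stmt_3_general {U : Type*} [Fintype U] [LinearOrder U] (Γ Γ' : Finset U) (p : ℕ) :
    ((topP p Γ) ∆ (topP p Γ')).card ≤ 2 * ((Γ ∆ Γ').card) :=
  card_symmDiff_apply_le_mul_card_symmDiff (topP p) 2 (card_topP_insert_symmDiff_le_two p) Γ Γ'

/-- `|Top_p(Γ) Δ Top_p(Γ')| ≤ 2|Γ Δ Γ'|`. -/
theorem stmt_3 {U : Type*} [Fintype U] [LinearOrder U] (Γ Γ' : Finset U) (p : ℕ)
    (hp1 : 1 ≤ p) (hp2 : p ≤ Fintype.card U) :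
    ((topP p Γ) ∆ (topP p Γ')).card ≤ 2 * ((Γ ∆ Γ').card) :=
  stmt_3_general Γ Γ' p
end

section
/- Let U be a finite linearly ordered set, Γ, Γ' ⊆ U, and 1 ≤ p ≤ |U|. With Top_p(S) defined as the set of the first min(p,|S|) elements of S in the enumeration that lists S in increasing order followed by U\S in increasing order: if |Top_p(Γ)| = |Top_p(Γ')| = p, then Top_p(Γ) and Top_p(Γ') each consist of some number of the smallest elements of Γ ∩ Γ' together with elements of Γ \ Γ' (respectively Γ' \ Γ), and ||Top_p(Γ') ∩ (Γ∩Γ')| − |Top_p(Γ) ∩ (Γ∩Γ')|| ≤ |Γ \ Γ'| (assuming without loss of generality |Top_p(Γ) ∩ (Γ∩Γ')| ≤ |Top_p(Γ') ∩ (Γ∩Γ')|). -/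
open Finset
open scoped symmDiff

/-!
Only the prefix `S.sort` of `Λ_S` can contribute elements of `S`, so `Top_p(S)` is an initial
segment of the increasing enumeration of `S`; in particular it is downward closed in `S`, hence
in `Γ ∩ Γ'`. For the counting bound, `Top_p(Γ)` has `p` elements, those outside `Γ ∩ Γ'` lie in
`Γ \ Γ'`, while `Top_p(Γ') ∩ (Γ ∩ Γ')` has at most `p` elements.
-/

theorem List.Pairwise.mem_take_of_le {α : Type*} [Preorder α] {l : List α}
    (hl : l.Pairwise (· < ·)) {p : ℕ} {x y : α} (hx : x ∈ l) (hy : y ∈ l.take p)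
    (hxy : x ≤ y) : x ∈ l.take p := by
  rw [← List.take_append_drop p l] at hl hx
  rcases List.mem_append.mp hx with hx | hx
  · exact hx
  · exact absurd hxy (not_le_of_gt ((List.pairwise_append.mp hl).2.2 y hy x hx))

section topP

variable {U : Type*} [Fintype U] [LinearOrder U]

theorem topP_subset (p : ℕ) (S : Finset U) : topP p S ⊆ S :=
  inter_subset_right

theorem mem_topP_iff {p : ℕ} {S : Finset U} {x : U} :
    x ∈ topP p S ↔ x ∈ S ∧ x ∈ (S.sort (· ≤ ·)).take p := by
  simp only [topP, lamList, List.take_append, mem_inter, List.mem_toFinset, List.mem_append]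
  constructor
  · rintro ⟨hx | hx, hS⟩
    · exact ⟨hS, hx⟩
    · have := (mem_sort _).mp (List.mem_of_mem_take hx)
      exact absurd hS (mem_compl.mp this)
  · rintro ⟨hS, hx⟩
    exact ⟨Or.inl hx, hS⟩

theorem mem_topP_of_le {p : ℕ} {S : Finset U} {x y : U} (hx : x ∈ S) (hy : y ∈ topP p S)
    (hxy : x ≤ y) : x ∈ topP p S := by
  rw [mem_topP_iff] at hy ⊢
  exact ⟨hx, S.sortedLT_sort.pairwise.mem_take_of_le ((mem_sort _).mpr hx) hy.2 hxy⟩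

end topP

theorem stmt_4_general {U : Type*} [Fintype U] [LinearOrder U] (Γ Γ' : Finset U) (p : ℕ)
    (h1 : (topP p Γ).card = p) (h2 : (topP p Γ').card = p) :
    (∀ x ∈ Γ ∩ Γ', ∀ y ∈ (topP p Γ) ∩ (Γ ∩ Γ'), x ≤ y → x ∈ topP p Γ) ∧
    (∀ x ∈ Γ ∩ Γ', ∀ y ∈ (topP p Γ') ∩ (Γ ∩ Γ'), x ≤ y → x ∈ topP p Γ') ∧
    (topP p Γ) ⊆ (Γ ∩ Γ') ∪ (Γ \ Γ') ∧
    (topP p Γ') ⊆ (Γ ∩ Γ') ∪ (Γ' \ Γ) ∧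
    ((topP p Γ') ∩ (Γ ∩ Γ')).card - ((topP p Γ) ∩ (Γ ∩ Γ')).card ≤ (Γ \ Γ').card := by
  refine ⟨fun x hx y hy hxy => mem_topP_of_le (mem_inter.mp hx).1 (mem_inter.mp hy).1 hxy,
    fun x hx y hy hxy => mem_topP_of_le (mem_inter.mp hx).2 (mem_inter.mp hy).1 hxy,
    (topP_subset p Γ).trans (by rw [union_comm, sdiff_union_inter]),
    (topP_subset p Γ').trans (by rw [inter_comm, union_comm, sdiff_union_inter]), ?_⟩
  have hsplit := card_inter_add_card_sdiff (topP p Γ) (Γ ∩ Γ')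
  have hout : #(topP p Γ \ (Γ ∩ Γ')) ≤ #(Γ \ Γ') := card_le_card <|
    (sdiff_subset_sdiff (topP_subset p Γ) subset_rfl).trans_eq (sdiff_inter_self_left Γ Γ')
  have hin' : #(topP p Γ' ∩ (Γ ∩ Γ')) ≤ p := (card_le_card inter_subset_left).trans h2.le
  omega

/-- If `|Top_p(Γ)| = |Top_p(Γ')| = p`, then `Top_p(Γ)` (resp. `Top_p(Γ')`) consists of
some number of the smallest elements of `Γ ∩ Γ'` together with elements of `Γ \ Γ'`
(resp. `Γ' \ Γ`) — i.e. its intersection with `Γ ∩ Γ'` is downward closed within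
`Γ ∩ Γ'` — and, assuming wlog `|Top_p(Γ) ∩ (Γ∩Γ')| ≤ |Top_p(Γ') ∩ (Γ∩Γ')|`,
`|Top_p(Γ') ∩ (Γ∩Γ')| - |Top_p(Γ) ∩ (Γ∩Γ')| ≤ |Γ \ Γ'|`. -/
theorem stmt_4 {U : Type*} [Fintype U] [LinearOrder U] (Γ Γ' : Finset U) (p : ℕ)
    (hp1 : 1 ≤ p) (hp2 : p ≤ Fintype.card U)
    (h1 : (topP p Γ).card = p) (h2 : (topP p Γ').card = p)
    (hwlog : ((topP p Γ) ∩ (Γ ∩ Γ')).card ≤ ((topP p Γ') ∩ (Γ ∩ Γ')).card) :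
    (∀ x ∈ Γ ∩ Γ', ∀ y ∈ (topP p Γ) ∩ (Γ ∩ Γ'), x ≤ y → x ∈ topP p Γ) ∧
    (∀ x ∈ Γ ∩ Γ', ∀ y ∈ (topP p Γ') ∩ (Γ ∩ Γ'), x ≤ y → x ∈ topP p Γ') ∧
    (topP p Γ) ⊆ (Γ ∩ Γ') ∪ (Γ \ Γ') ∧
    (topP p Γ') ⊆ (Γ ∩ Γ') ∪ (Γ' \ Γ) ∧
    ((topP p Γ') ∩ (Γ ∩ Γ')).card - ((topP p Γ) ∩ (Γ ∩ Γ')).card ≤ (Γ \ Γ').card :=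
  stmt_4_general Γ Γ' p h1 h2
end

section
/- Let Γ, Γ' ⊆ V×V×V where |V| = n, and let 1 ≤ r ≤ p ≤ n³. For R ⊆ {1,…,n³} define Y(R,Γ) = {Λ[a] : a ∈ R} ∩ Γ, where Λ lists the triples of Γ in increasing order followed by the remaining triples in increasing order (with respect to a fixed ordering on V×V×V). Then there exists a permutation π of {1,…,p} such that, when R is a uniformly random r-element subset of {1,…,p}, Pr[ |Y(R,Γ) Δ Y(π(R),Γ')| ≤ 22·r·|Γ Δ Γ'|/p + 100·log n ] ≥ 1 − 2·(1/2)^(11·r·|Γ Δ Γ'|/p + 50·log n). -/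
open Finset
open scoped symmDiff Classical

/-- `Y(R,Γ) = {Λ[a] : a ∈ R} ∩ Γ`, where `Λ` is the list `lamList Γ` and indices
in `R` select positions of that list. -/
noncomputable def Ysel {U : Type*} [Fintype U] [LinearOrder U] [Inhabited U]
    {p : ℕ} (R : Finset (Fin p)) (Γ : Finset U) : Finset U :=
  (R.image fun a => (lamList Γ).getD a.val default) ∩ Γ

/-!
Choose a permutation `π` of the positions `{1,…,p}` sending a position to the position of the
same triple in `Λ(Γ')` whenever that triple also occurs among the first `p` entries of `Λ(Γ')`.
The first `p` entries of `Λ(Γ)` that lie in `Γ` are the `p` smallest elements of `Γ`, so a triple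
of `Y(R,Γ) Δ Y(π(R),Γ')` can only come from a position of `R` in the set `E` of positions carrying
an element of `lowest Γ p Δ lowest Γ' p`; comparing ranks in `Γ` and in `Γ'` gives
`|E| ≤ 2|Γ Δ Γ'|`, and `|Y Δ Y'| ≤ 2|R ∩ E|`. A uniform `r`-subset meets `E` in `k = ⌊t⌋ + 1` or
more points with probability at most `C(|E|,k) C(p-k,r-k) / C(p,r) ≤ (e|E|r/(pk))^k ≤ 2^(-k)`.
-/

theorem Finset.card_symmDiff {α : Type*} [DecidableEq α] (s t : Finset α) :
    #(s ∆ t) = #(s \ t) + #(t \ s) := by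
  rw [symmDiff_def, sup_eq_union, card_union_of_disjoint disjoint_sdiff_sdiff]

section Rank

variable {α : Type*} [LinearOrder α]

def lowest (s : Finset α) (p : ℕ) : Finset α := {x ∈ s | #{y ∈ s | y < x} < p}

theorem card_filter_lt_strictMonoOn (s : Finset α) :
    StrictMonoOn (fun x => #{y ∈ s | y < x}) s := by
  intro x hx z _ hxz
  refine card_lt_card ⟨fun y hy => ?_, fun h => ?_⟩
  · simp only [mem_filter] at hy ⊢
    exact ⟨hy.1, hy.2.trans hxz⟩
  · exact lt_irrefl x (mem_filter.1 (h (mem_filter.2 ⟨hx, hxz⟩))).2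

theorem card_filter_lt_le_add_card_sdiff (s t : Finset α) (x : α) :
    #{y ∈ t | y < x} ≤ #{y ∈ s | y < x} + #(t \ s) := by
  refine (card_le_card fun y hy => ?_).trans (card_union_le _ _)
  simp only [mem_filter, mem_union, mem_sdiff] at hy ⊢
  by_cases hys : y ∈ s <;> tauto

theorem card_lowest_sdiff_lowest_le (s t : Finset α) (p : ℕ) :
    #(lowest s p \ lowest t p) ≤ #(s ∆ t) := by
  set B := {x ∈ s ∩ t | p ≤ #{y ∈ t | y < x} ∧ #{y ∈ s | y < x} < p}
  have hsub : lowest s p \ lowest t p ⊆ (s \ t) ∪ B := by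
    intro x hx
    simp only [lowest, B, mem_sdiff, mem_filter, mem_union, mem_inter, not_and, not_lt] at hx ⊢
    by_cases hxt : x ∈ t <;> tauto
  -- the rank in `s` maps `B` injectively into `[p - #(t \ s), p)`
  have hB : #B ≤ #(t \ s) := by
    have hmaps : ∀ x ∈ B, #{y ∈ s | y < x} ∈ Ico (p - #(t \ s)) p := by
      intro x hx
      simp only [B, mem_filter] at hx
      have := card_filter_lt_le_add_card_sdiff s t x
      simp only [mem_Ico]
      omega
    have hinj : Set.InjOn (fun x => #{y ∈ s | y < x}) B :=
      (card_filter_lt_strictMonoOn s).injOn.mono fun x hx => (mem_inter.1 (mem_filter.1 hx).1).1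
    have := card_le_card_of_injOn _ hmaps hinj
    simp only [Nat.card_Ico] at this
    omega
  calc #(lowest s p \ lowest t p) ≤ #(s \ t) + #B := (card_le_card hsub).trans (card_union_le _ _)
    _ ≤ #(s ∆ t) := by rw [card_symmDiff]; omega

theorem card_lowest_symmDiff_lowest_le (s t : Finset α) (p : ℕ) :
    #(lowest s p ∆ lowest t p) ≤ 2 * #(s ∆ t) := by
  have h₁ := card_lowest_sdiff_lowest_le s t p
  have h₂ := card_lowest_sdiff_lowest_le t s p
  rw [symmDiff_comm t s] at h₂
  rw [card_symmDiff]
  omega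

theorem card_filter_lt_orderEmbOfFin (s : Finset α) {k : ℕ} (h : #s = k) (i : Fin k) :
    #{y ∈ s | y < s.orderEmbOfFin h i} = i := by
  have : {y ∈ s | y < s.orderEmbOfFin h i} = (Iio i).map (s.orderEmbOfFin h).toEmbedding := by
    ext y
    simp only [mem_filter, mem_map, mem_Iio, RelEmbedding.coe_toEmbedding]
    constructor
    · rintro ⟨hy, hlt⟩
      obtain ⟨j, rfl⟩ : y ∈ Set.range (s.orderEmbOfFin h) := by
        rwa [range_orderEmbOfFin]
      exact ⟨j, (s.orderEmbOfFin h).lt_iff_lt.1 hlt, rfl⟩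
    · rintro ⟨j, hj, rfl⟩
      exact ⟨orderEmbOfFin_mem s h j, (s.orderEmbOfFin h).lt_iff_lt.2 hj⟩
  rw [this, card_map, Fin.card_Iio]

end Rank

section LamList

variable {U : Type*} [Fintype U] [LinearOrder U] (S : Finset U)

theorem length_lamList : (lamList S).length = Fintype.card U := by
  simp only [lamList, List.length_append, length_sort, card_compl]
  have := card_le_univ S
  omega

theorem nodup_lamList : (lamList S).Nodup :=
  (sort_nodup _ _).append (sort_nodup _ _) fun _ hx hx' =>
    mem_compl.1 ((mem_sort _).1 hx') ((mem_sort _).1 hx)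

theorem getElem_lamList_of_lt {i : ℕ} (h : i < #S) :
    (lamList S)[i]'(by have := card_le_univ S; rw [length_lamList]; omega) =
      S.orderEmbOfFin rfl ⟨i, h⟩ := by
  simp only [lamList, orderEmbOfFin_apply]
  exact List.getElem_append_left _

theorem getElem_lamList_mem_iff {i : ℕ} (h : i < (lamList S).length) :
    (lamList S)[i] ∈ S ↔ i < #S := by
  refine ⟨fun hi => ?_, fun hi => getElem_lamList_of_lt S hi ▸ orderEmbOfFin_mem S rfl _⟩
  by_contra hge
  have hlen : (S.sort (· ≤ ·)).length ≤ i := by rw [length_sort]; omega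
  simp only [lamList, List.getElem_append_right hlen] at hi
  exact mem_compl.1 ((mem_sort _).1 (List.getElem_mem _)) hi

variable [Inhabited U] {p : ℕ} (hp : p ≤ Fintype.card U)
include hp

theorem injective_getD_lamList :
    Function.Injective fun a : Fin p => (lamList S).getD a.val default := by
  intro a b hab
  have hlen : p ≤ (lamList S).length := (length_lamList S).symm ▸ hp
  simp only [List.getD_eq_getElem _ _ (a.2.trans_le hlen),
    List.getD_eq_getElem _ _ (b.2.trans_le hlen)] at hab
  exact Fin.ext ((nodup_lamList S).getElem_inj_iff.1 hab)

theorem image_getD_lamList_inter :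
    (univ : Finset (Fin p)).image (fun a => (lamList S).getD a.val default) ∩ S = lowest S p := by
  have hlen : p ≤ (lamList S).length := (length_lamList S).symm ▸ hp
  ext x
  simp only [mem_inter, mem_image, mem_univ, true_and, lowest, mem_filter]
  constructor
  · rintro ⟨⟨a, rfl⟩, hx⟩
    rw [List.getD_eq_getElem _ _ (a.2.trans_le hlen)] at hx ⊢
    have ha := (getElem_lamList_mem_iff S _).1 hx
    rw [getElem_lamList_of_lt S ha, card_filter_lt_orderEmbOfFin]
    exact ⟨orderEmbOfFin_mem S rfl _, a.2⟩
  · rintro ⟨hx, hrank⟩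
    obtain ⟨j, rfl⟩ : x ∈ Set.range (S.orderEmbOfFin rfl) := by rwa [range_orderEmbOfFin]
    rw [card_filter_lt_orderEmbOfFin] at hrank
    refine ⟨⟨⟨j, hrank⟩, ?_⟩, hx⟩
    rw [List.getD_eq_getElem _ _ (hrank.trans_le hlen), getElem_lamList_of_lt S j.2]

end LamList

section Matching

variable {α U : Type*}

theorem exists_perm_eq_of_apply_eq_apply_perm [Finite α] {g g' : α → U}
    (hg : Function.Injective g) (hg' : Function.Injective g') :
    ∃ π : Equiv.Perm α, ∀ a b, g a = g' (π b) → a = b := by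
  let S := {a // ∃ b, g' b = g a}
  have hspec (a : S) : g' a.2.choose = g a := a.2.choose_spec
  obtain ⟨π, hπ⟩ := Equiv.Perm.exists_extending_pair (Subtype.val : S → α) (fun a => a.2.choose)
    Subtype.val_injective fun a b hab => Subtype.ext (hg ((hspec a).symm.trans
      ((congrArg g' hab).trans (hspec b))))
  refine ⟨π, fun a b hab => π.injective (hg' ?_)⟩
  have := hspec ⟨a, π b, hab.symm⟩
  rw [← hπ] at this
  rw [this, hab]

variable [DecidableEq U] [Fintype α] {g h : α → U}

theorem card_image_inter_sdiff_le (hgh : ∀ a b, g a = h b → a = b) (Γ Γ' : Finset U)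
    (R : Finset α) :
    #((R.image g ∩ Γ) \ (R.image h ∩ Γ')) ≤
      #{a ∈ R | g a ∈ (univ.image g ∩ Γ) \ (univ.image h ∩ Γ')} := by
  refine (card_le_card fun x hx => ?_).trans (card_image_le (f := g))
  simp only [mem_sdiff, mem_inter, mem_image, mem_univ, true_and, not_and, mem_filter] at hx ⊢
  obtain ⟨⟨⟨a, haR, rfl⟩, hxΓ⟩, hx'⟩ := hx
  refine ⟨a, ⟨haR, ⟨⟨a, rfl⟩, hxΓ⟩, fun ⟨b, hb⟩ => ?_⟩, rfl⟩
  obtain rfl := hgh a b hb.symm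
  exact hx' ⟨a, haR, hb⟩

theorem exists_card_image_inter_symmDiff_le [DecidableEq α] (hg : Function.Injective g)
    (hh : Function.Injective h) (hgh : ∀ a b, g a = h b → a = b) (Γ Γ' : Finset U) :
    ∃ E : Finset α, #E ≤ #((univ.image g ∩ Γ) ∆ (univ.image h ∩ Γ')) ∧
      ∀ R : Finset α, #((R.image g ∩ Γ) ∆ (R.image h ∩ Γ')) ≤ 2 * #(R ∩ E) := by
  set A := univ.image g ∩ Γ
  set A' := univ.image h ∩ Γ'
  set D : Finset α := {a | g a ∈ A \ A'}
  set D' : Finset α := {a | h a ∈ A' \ A}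
  refine ⟨D ∪ D', ?_, fun R => ?_⟩
  · have hD : #D ≤ #(A \ A') := card_le_card_of_injOn g (fun a ha => (mem_filter.1 ha).2) hg.injOn
    have hD' : #D' ≤ #(A' \ A) :=
      card_le_card_of_injOn h (fun a ha => (mem_filter.1 ha).2) hh.injOn
    rw [card_symmDiff]
    exact (card_union_le _ _).trans (add_le_add hD hD')
  · have hRD : #{a ∈ R | g a ∈ A \ A'} ≤ #(R ∩ (D ∪ D')) :=
      card_le_card fun a ha => by simp_all [D]
    have hRD' : #{a ∈ R | h a ∈ A' \ A} ≤ #(R ∩ (D ∪ D')) :=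
      card_le_card fun a ha => by simp_all [D']
    have h₁ : #((R.image g ∩ Γ) \ (R.image h ∩ Γ')) ≤ #{a ∈ R | g a ∈ A \ A'} :=
      card_image_inter_sdiff_le hgh Γ Γ' R
    have h₂ : #((R.image h ∩ Γ') \ (R.image g ∩ Γ)) ≤ #{a ∈ R | h a ∈ A' \ A} :=
      card_image_inter_sdiff_le (fun a b hab => (hgh b a hab.symm).symm) Γ' Γ R
    rw [card_symmDiff]
    omega

end Matching

theorem exists_perm_card_ysel_symmDiff_le {U : Type*} [Fintype U] [LinearOrder U] [Inhabited U]
    (Γ Γ' : Finset U) {p : ℕ} (hp : p ≤ Fintype.card U) :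
    ∃ π : Equiv.Perm (Fin p), ∃ E : Finset (Fin p), #E ≤ 2 * #(Γ ∆ Γ') ∧
      ∀ R : Finset (Fin p), #(Ysel R Γ ∆ Ysel (R.image π) Γ') ≤ 2 * #(R ∩ E) := by
  have hg := injective_getD_lamList Γ hp
  have hg' := injective_getD_lamList Γ' hp
  obtain ⟨π, hπ⟩ := exists_perm_eq_of_apply_eq_apply_perm hg hg'
  obtain ⟨E, hE, hY⟩ := exists_card_image_inter_symmDiff_le hg (hg'.comp π.injective) hπ Γ Γ'
  refine ⟨π, E, ?_, fun R => ?_⟩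
  · rw [← image_image, image_univ_equiv, image_getD_lamList_inter Γ hp,
      image_getD_lamList_inter Γ' hp] at hE
    exact hE.trans (card_lowest_symmDiff_lowest_le Γ Γ' p)
  · simpa only [Ysel, image_image] using hY R

section Sampling

variable {α : Type*} [Fintype α] [DecidableEq α]

theorem card_filter_superset_le (r : ℕ) (Q : Finset α) :
    #{R ∈ powersetCard r (univ : Finset α) | Q ⊆ R} ≤ (Fintype.card α - #Q).choose (r - #Q) := by
  rw [← card_compl, ← card_powersetCard]
  refine card_le_card_of_injOn (· \ Q) (fun R hR => ?_) fun R hR R' hR' h => ?_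
  · simp only [mem_coe, mem_filter, mem_powersetCard, subset_univ, true_and] at hR
    rw [mem_coe, mem_powersetCard]
    exact ⟨fun x hx => mem_compl.2 (mem_sdiff.1 hx).2, by rw [card_sdiff_of_subset hR.2, hR.1]⟩
  · simp only [mem_coe, mem_filter] at hR hR'
    rw [← sdiff_union_of_subset hR.2, ← sdiff_union_of_subset hR'.2]
    exact congrArg (· ∪ Q) h

theorem card_filter_le_card_inter_le (E : Finset α) (k r : ℕ) :
    #{R ∈ powersetCard r (univ : Finset α) | k ≤ #(R ∩ E)} ≤
      (#E).choose k * (Fintype.card α - k).choose (r - k) := by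
  have hcover : {R ∈ powersetCard r (univ : Finset α) | k ≤ #(R ∩ E)} ⊆
      (E.powersetCard k).biUnion fun Q => {R ∈ powersetCard r univ | Q ⊆ R} := by
    intro R hR
    obtain ⟨hR, hk⟩ := mem_filter.1 hR
    obtain ⟨Q, hQ, hQk⟩ := exists_subset_card_eq hk
    exact mem_biUnion.2 ⟨Q, mem_powersetCard.2 ⟨hQ.trans inter_subset_right, hQk⟩,
      mem_filter.2 ⟨hR, hQ.trans inter_subset_left⟩⟩
  calc _ ≤ _ := card_le_card hcover
    _ ≤ ∑ Q ∈ E.powersetCard k, #{R ∈ powersetCard r univ | Q ⊆ R} := card_biUnion_le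
    _ ≤ ∑ _Q ∈ E.powersetCard k, (Fintype.card α - k).choose (r - k) := by
      refine sum_le_sum fun Q hQ => ?_
      simpa only [(mem_powersetCard.1 hQ).2] using card_filter_superset_le r Q
    _ = _ := by rw [sum_const, card_powersetCard, smul_eq_mul]

end Sampling

theorem Nat.descFactorial_mul_pow_le {r p : ℕ} (hrp : r ≤ p) (k : ℕ) :
    r.descFactorial k * p ^ k ≤ p.descFactorial k * r ^ k := by
  induction k with
  | zero => simp
  | succ k ih =>
    have hstep : (r - k) * p ≤ (p - k) * r := by
      rw [Nat.sub_mul, Nat.sub_mul, Nat.mul_comm p r]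
      exact Nat.sub_le_sub_left (Nat.mul_le_mul_left k hrp) _
    calc r.descFactorial (k + 1) * p ^ (k + 1)
        = ((r - k) * p) * (r.descFactorial k * p ^ k) := by
          rw [Nat.descFactorial_succ, pow_succ]; ring
      _ ≤ ((p - k) * r) * (p.descFactorial k * r ^ k) := Nat.mul_le_mul hstep ih
      _ = p.descFactorial (k + 1) * r ^ (k + 1) := by
          rw [Nat.descFactorial_succ, pow_succ]; ring

theorem Nat.choose_sub_mul_pow_le {k r p : ℕ} (hkr : k ≤ r) (hrp : r ≤ p) :
    (p - k).choose (r - k) * p ^ k ≤ p.choose r * r ^ k := by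
  have hpos : 0 < k.factorial * p.choose k :=
    Nat.mul_pos k.factorial_pos (Nat.choose_pos (hkr.trans hrp))
  refine Nat.le_of_mul_le_mul_left ?_ hpos
  calc k.factorial * p.choose k * ((p - k).choose (r - k) * p ^ k)
      = p.choose r * (r.descFactorial k * p ^ k) := by
        rw [Nat.descFactorial_eq_factorial_mul_choose]
        linear_combination (k.factorial * p ^ k) * (Nat.choose_mul (n := p) hkr).symm
    _ ≤ p.choose r * (p.descFactorial k * r ^ k) :=
        Nat.mul_le_mul_left _ (Nat.descFactorial_mul_pow_le hrp k)
    _ = k.factorial * p.choose k * (p.choose r * r ^ k) := by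
        rw [Nat.descFactorial_eq_factorial_mul_choose]; ring

theorem Real.pow_div_factorial_le_exp_mul_div_pow {x : ℝ} (hx : 0 ≤ x) (k : ℕ) :
    x ^ k / k.factorial ≤ (exp 1 * x / k) ^ k := by
  rcases Nat.eq_zero_or_pos k with rfl | hk
  · simp
  have hk' : (0 : ℝ) < k := by exact_mod_cast hk
  calc x ^ k / k.factorial = (x / k) ^ k * ((k : ℝ) ^ k / k.factorial) := by
        rw [div_pow]; field_simp
    _ ≤ (x / k) ^ k * exp k := by gcongr; exact pow_div_factorial_le_exp _ hk'.le k
    _ = (exp 1 * x / k) ^ k := by rw [← exp_one_pow, mul_div_assoc, mul_pow]; ring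

theorem card_filter_lt_card_inter_le {α : Type*} [Fintype α] [DecidableEq α] (E : Finset α)
    {r : ℕ} (hr : r ≤ Fintype.card α) {t : ℝ} (ht : 0 ≤ t)
    (hEt : 11 * #E * r / Fintype.card α ≤ 2 * t) :
    (#{R ∈ powersetCard r (univ : Finset α) | t < #(R ∩ E)} : ℝ) ≤
      (Fintype.card α).choose r * (1 / 2 : ℝ) ^ t := by
  set p := Fintype.card α
  set k := ⌊t⌋₊ + 1
  have hkt : t < k := by simpa [k] using Nat.lt_floor_add_one t
  have hsub : {R ∈ powersetCard r (univ : Finset α) | t < #(R ∩ E)} ⊆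
      {R ∈ powersetCard r (univ : Finset α) | k ≤ #(R ∩ E)} :=
    fun R hR => mem_filter.2 ⟨(mem_filter.1 hR).1, (Nat.floor_lt ht).2 (mem_filter.1 hR).2⟩
  by_cases hkr : k ≤ r
  swap
  · rw [filter_false_of_mem fun R hR h => hkr ?_]
    · simp only [card_empty, Nat.cast_zero]; positivity
    · exact (mem_filter.1 (hsub (mem_filter.2 ⟨hR, h⟩))).2.trans
        ((card_le_card inter_subset_left).trans (mem_powersetCard.1 hR).2.le)
  have hp : (0 : ℝ) < p := by exact_mod_cast (Nat.succ_pos _).trans_le (hkr.trans hr)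
  have hk : (0 : ℝ) < k := by positivity
  have hcount : (#{R ∈ powersetCard r (univ : Finset α) | t < #(R ∩ E)} : ℝ) ≤
      (#E).choose k * (p - k).choose (r - k) := by
    exact_mod_cast (card_le_card hsub).trans (card_filter_le_card_inter_le E k r)
  have hchoose : ((#E).choose k : ℝ) ≤ (#E : ℝ) ^ k / k.factorial := Nat.choose_le_pow_div k #E
  have hsample : ((p - k).choose (r - k) : ℝ) ≤ p.choose r * (r / p : ℝ) ^ k := by
    rw [div_pow, mul_div_assoc', le_div_iff₀ (by positivity)]
    exact_mod_cast Nat.choose_sub_mul_pow_le hkr hr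
  -- `2e/11 < 1/2`: this is where the constant `11` comes from
  have hhalf : Real.exp 1 * (#E * r / p) / k ≤ 1 / 2 := by
    have hEr : (0 : ℝ) ≤ #E * r / p := by positivity
    have : 11 * (#E * r / p : ℝ) ≤ 2 * k := by rw [← mul_div_assoc, ← mul_assoc]; linarith
    rw [div_le_iff₀ hk]
    nlinarith [Real.exp_one_lt_d9]
  calc _ ≤ ((#E).choose k : ℝ) * (p - k).choose (r - k) := hcount
    _ ≤ (#E : ℝ) ^ k / k.factorial * (p.choose r * (r / p : ℝ) ^ k) :=
        mul_le_mul hchoose hsample (by positivity) (by positivity)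
    _ = p.choose r * ((#E * r / p : ℝ) ^ k / k.factorial) := by ring
    _ ≤ p.choose r * (Real.exp 1 * (#E * r / p) / k) ^ k := by
        gcongr; exact Real.pow_div_factorial_le_exp_mul_div_pow (by positivity) k
    _ ≤ p.choose r * (1 / 2 : ℝ) ^ (k : ℝ) := by
        rw [Real.rpow_natCast]; gcongr
    _ ≤ p.choose r * (1 / 2 : ℝ) ^ t := mul_le_mul_of_nonneg_left
        (Real.rpow_le_rpow_of_exponent_ge (by norm_num) (by norm_num) hkt.le) (by positivity)

theorem one_sub_le_card_filter_div {β : Type*} {s : Finset β} (hs : s.Nonempty)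
    {P Q : β → Prop} [DecidablePred P] [DecidablePred Q] (hPQ : ∀ x ∈ s, ¬ Q x → P x) {b : ℝ}
    (hQ : #{x ∈ s | Q x} ≤ #s * b) :
    1 - b ≤ #{x ∈ s | P x} / #s := by
  have hs' : (0 : ℝ) < #s := by exact_mod_cast hs.card_pos
  have hcover : s ⊆ {x ∈ s | P x} ∪ {x ∈ s | Q x} := fun x hx => by
    by_cases hQx : Q x
    · exact mem_union_right _ (mem_filter.2 ⟨hx, hQx⟩)
    · exact mem_union_left _ (mem_filter.2 ⟨hx, hPQ x hx hQx⟩)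
  have hsplit := (card_le_card hcover).trans (card_union_le _ _)
  rify at hsplit
  rw [le_div_iff₀ hs']
  linarith

theorem stmt_5_general {V : Type*} [Fintype V] [Inhabited V] [LinearOrder (V × V × V)]
    (n : ℕ) (hn : Fintype.card V = n)
    (Γ Γ' : Finset (V × V × V)) (p r : ℕ) (hrp : r ≤ p) (hp : p ≤ n ^ 3) :
    ∃ π : Equiv.Perm (Fin p),
      ((((Finset.univ : Finset (Fin p)).powersetCard r).filter (fun R =>
            (((Ysel R Γ) ∆ (Ysel (R.image π) Γ')).card : ℝ) ≤
              22 * r * ((Γ ∆ Γ').card : ℝ) / p + 100 * Real.logb 2 n)).card : ℝ)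
          / ((((Finset.univ : Finset (Fin p)).powersetCard r)).card : ℝ)
        ≥ 1 - 2 * ((1 : ℝ) / 2) ^
            (11 * r * ((Γ ∆ Γ').card : ℝ) / p + 50 * Real.logb 2 n) := by
  have hcard : Fintype.card (V × V × V) = n ^ 3 := by simp only [Fintype.card_prod, hn]; ring
  obtain ⟨π, E, hE, hY⟩ := exists_perm_card_ysel_symmDiff_le Γ Γ' (hp.trans_eq hcard.symm)
  -- the statement's `∆` is built from the classical `DecidableEq` instance, not the order's
  replace hE : #E ≤ 2 * #(Γ ∆ Γ') := by convert hE
  replace hY (R : Finset (Fin p)) : #(Ysel R Γ ∆ Ysel (R.image π) Γ') ≤ 2 * #(R ∩ E) := by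
    convert hY R
  refine ⟨π, ?_⟩
  set t := 11 * r * (#(Γ ∆ Γ') : ℝ) / p + 50 * Real.logb 2 n
  have hlog : 0 ≤ Real.logb 2 n :=
    div_nonneg (Real.log_natCast_nonneg n) (Real.log_nonneg one_le_two)
  have ht : 0 ≤ t := by positivity
  have hEt : 11 * #E * r / Fintype.card (Fin p) ≤ 2 * t := by
    rw [Fintype.card_fin]
    calc 11 * #E * r / p ≤ 11 * (2 * #(Γ ∆ Γ') : ℝ) * r / p := by gcongr; exact_mod_cast hE
      _ = 2 * (11 * r * #(Γ ∆ Γ') / p) := by ring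
      _ ≤ 2 * t := by linarith
  have htail := card_filter_lt_card_inter_le E (hrp.trans_eq (Fintype.card_fin p).symm) ht hEt
  rw [← card_univ, ← card_powersetCard] at htail
  have hhalf := Real.rpow_nonneg (by norm_num : (0 : ℝ) ≤ 1 / 2) t
  refine (sub_le_sub_left (le_mul_of_one_le_left hhalf one_le_two) 1).trans
    (one_sub_le_card_filter_div (powersetCard_nonempty.2 (by simpa using hrp))
      (fun R _ hR => ?_) htail)
  calc (#(Ysel R Γ ∆ Ysel (R.image π) Γ') : ℝ) ≤ 2 * #(R ∩ E) := by exact_mod_cast hY R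
    _ ≤ 2 * t := by linarith [not_lt.1 hR]
    _ = _ := by ring

/-- There is a permutation `π` of `{1,…,p}` such that for a uniformly random
`r`-element subset `R` of `{1,…,p}`,
`|Y(R,Γ) Δ Y(π(R),Γ')| ≤ 22 r |Γ Δ Γ'| / p + 100 log n`
holds with probability at least `1 - 2 (1/2)^(11 r |Γ Δ Γ'| / p + 50 log n)`. -/
theorem stmt_5 {V : Type*} [Fintype V] [Inhabited V] [LinearOrder (V × V × V)]
    (n : ℕ) (hn : Fintype.card V = n)
    (Γ Γ' : Finset (V × V × V)) (p r : ℕ) (hr : 1 ≤ r) (hrp : r ≤ p) (hp : p ≤ n ^ 3) :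
    ∃ π : Equiv.Perm (Fin p),
      ((((Finset.univ : Finset (Fin p)).powersetCard r).filter (fun R =>
            (((Ysel R Γ) ∆ (Ysel (R.image π) Γ')).card : ℝ) ≤
              22 * r * ((Γ ∆ Γ').card : ℝ) / p + 100 * Real.logb 2 n)).card : ℝ)
          / ((((Finset.univ : Finset (Fin p)).powersetCard r)).card : ℝ)
        ≥ 1 - 2 * ((1 : ℝ) / 2) ^
            (11 * r * ((Γ ∆ Γ').card : ℝ) / p + 50 * Real.logb 2 n) :=
  stmt_5_general n hn Γ Γ' p r hrp hp
end

section
/- Let V_i, V_j, V_k be finite sets of sizes r_i, r_j, r_k. Fix F_ik ⊆ V_i × V_k such that for every w ∈ V_k, |{u ∈ V_i : (u,w) ∈ F_ik}| ≤ 2·f_ik/r_k. Let F be a uniformly random subset of V_i × V_j of size f_ij, and fix any pair (v,w) ∈ V_j × V_k. Then Pr[ |{u ∈ V_i : (u,v) ∈ F and (u,w) ∈ F_ik}| ≥ 11·f_ij·f_ik/(r_i·r_j·r_k) ] ≤ (1/2)^(11·f_ij·f_ik/(r_i·r_j·r_k)), provided 11·f_ik/r_k / |{u : (u,w) ∈ F_ik}|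 − 1 > 2e − 1. -/
/-!
Put `d = #{u ∈ V_i | (u, w) ∈ F_ik}` and `N = r_i r_j`. The count in question is `#(F ∩ T)` for
`T = {u ∈ V_i | (u, w) ∈ F_ik} × {v}`, a set of `d` cells. A union bound over the `a`-subsets of `T`
gives `Pr[#(F ∩ T) ≥ a] ≤ C(d, a) · C(N - a, f_ij - a) / C(N, f_ij) = C(d, a) · C(f_ij, a) / C(N, a)`,
which is at most `C(d, a) (f_ij / N)^a`, and
`C(d, a) ≤ (e d / a)^a`. With `a = ⌈11 f_ij f_ik / (r_i r_j r_k)⌉`, the hypothesis on `d` makes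
`e d f_ij / (a N) ≤ 1/2`.
-/

open Finset Real

namespace Nat

theorem descFactorial_mul_pow_le_descFactorial_mul_pow {m n : ℕ} (h : m ≤ n) (a : ℕ) :
    m.descFactorial a * n ^ a ≤ n.descFactorial a * m ^ a := by
  rw [descFactorial_eq_prod_range, descFactorial_eq_prod_range, pow_eq_prod_const,
    ← prod_mul_distrib, pow_eq_prod_const, ← prod_mul_distrib]
  refine prod_le_prod' fun i _ => ?_
  calc (m - i) * n = m * n - i * n := Nat.sub_mul ..
    _ ≤ m * n - i * m := Nat.sub_le_sub_left (Nat.mul_le_mul_left i h) _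
    _ = (n - i) * m := by rw [Nat.sub_mul, Nat.mul_comm m n]

theorem choose_mul_pow_le_choose_mul_pow_s7 {m n : ℕ} (h : m ≤ n) (a : ℕ) :
    m.choose a * n ^ a ≤ n.choose a * m ^ a := by
  have key := descFactorial_mul_pow_le_descFactorial_mul_pow h a
  rw [descFactorial_eq_factorial_mul_choose, descFactorial_eq_factorial_mul_choose,
    Nat.mul_assoc, Nat.mul_assoc] at key
  exact Nat.le_of_mul_le_mul_left key a.factorial_pos

theorem choose_sub_mul_pow_le_s7 {N f a : ℕ} (haf : a ≤ f) (hfN : f ≤ N) :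
    (N - a).choose (f - a) * N ^ a ≤ N.choose f * f ^ a := by
  refine Nat.le_of_mul_le_mul_left ?_ (choose_pos (haf.trans hfN))
  calc N.choose a * ((N - a).choose (f - a) * N ^ a) = N.choose f * (f.choose a * N ^ a) := by
        rw [← Nat.mul_assoc, ← choose_mul haf, Nat.mul_assoc]
    _ ≤ N.choose f * (N.choose a * f ^ a) :=
        Nat.mul_le_mul_left _ (choose_mul_pow_le_choose_mul_pow_s7 hfN a)
    _ = N.choose a * (N.choose f * f ^ a) := by ring

theorem choose_le_exp_mul_div_pow (n k : ℕ) : (n.choose k : ℝ) ≤ (exp 1 * n / k) ^ k := by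
  have hk : (k : ℝ) ^ k / k.factorial ≤ exp 1 ^ k := by
    rw [exp_one_pow]; exact pow_div_factorial_le_exp _ k.cast_nonneg k
  have hkk : (0 : ℝ) < (k : ℝ) ^ k := by
    rcases k.eq_zero_or_pos with rfl | hk0
    · simp
    · positivity
  calc (n.choose k : ℝ) ≤ (n : ℝ) ^ k / k.factorial := choose_le_pow_div k n
    _ = (n : ℝ) ^ k / k ^ k * (k ^ k / k.factorial) := by field_simp
    _ ≤ (n : ℝ) ^ k / k ^ k * exp 1 ^ k := by gcongr
    _ = (exp 1 * n / k) ^ k := by rw [div_pow, mul_pow]; ring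

end Nat

section Hypergeometric

variable {α : Type*} [DecidableEq α] {U T : Finset α} {f a : ℕ}

theorem card_filter_le_card_inter_le_s7 (hTU : T ⊆ U) (haf : a ≤ f) :
    #{F ∈ U.powersetCard f | a ≤ #(F ∩ T)} ≤ (#T).choose a * (#U - a).choose (f - a) := by
  have hcover : {F ∈ U.powersetCard f | a ≤ #(F ∩ T)} ⊆
      (T.powersetCard a).biUnion fun S => {F ∈ U.powersetCard f | S ⊆ F} := by
    intro F hF
    obtain ⟨hFU, hFT⟩ := mem_filter.1 hF
    obtain ⟨S, hSFT, hSa⟩ := exists_subset_card_eq hFT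
    exact mem_biUnion.2 ⟨S, mem_powersetCard.2 ⟨hSFT.trans inter_subset_right, hSa⟩,
      mem_filter.2 ⟨hFU, hSFT.trans inter_subset_left⟩⟩
  calc _ ≤ _ := card_le_card hcover
    _ ≤ ∑ S ∈ T.powersetCard a, #{F ∈ U.powersetCard f | S ⊆ F} := card_biUnion_le
    _ = ∑ _S ∈ T.powersetCard a, (#U - a).choose (f - a) := by
        refine sum_congr rfl fun S hS => ?_
        obtain ⟨hST, hSa⟩ := mem_powersetCard.1 hS
        rw [card_filter_powersetCard_subset S U f (hST.trans hTU) (hSa ▸ haf), hSa]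
    _ = _ := by rw [sum_const, card_powersetCard, smul_eq_mul]

theorem card_filter_le_card_inter_div_le (hTU : T ⊆ U) :
    (#{F ∈ U.powersetCard f | a ≤ #(F ∩ T)} : ℝ) / #(U.powersetCard f)
      ≤ (#T).choose a * (f / #U) ^ a := by
  rcases eq_empty_or_nonempty {F ∈ U.powersetCard f | a ≤ #(F ∩ T)} with hempty | ⟨F, hF⟩
  · rw [hempty, card_empty, Nat.cast_zero, zero_div]
    positivity
  obtain ⟨hFU, hFT⟩ := mem_filter.1 hF
  obtain ⟨hFU, hFf⟩ := mem_powersetCard.1 hFU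
  have haf : a ≤ f := hFf ▸ hFT.trans (card_le_card inter_subset_left)
  have hfN : f ≤ #U := hFf ▸ card_le_card hFU
  have hN : (0 : ℝ) < #U ^ a := by
    have : 0 < #U ^ a := Nat.pow_pos_iff.2 (by omega)
    exact_mod_cast this
  have htotal : (0 : ℝ) < #(U.powersetCard f) := by
    rw [card_powersetCard]; exact_mod_cast Nat.choose_pos hfN
  have hcount : (#{F ∈ U.powersetCard f | a ≤ #(F ∩ T)} : ℝ) * #U ^ a
      ≤ (#T).choose a * f ^ a * #(U.powersetCard f) := by
    rw [card_powersetCard]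
    exact_mod_cast calc _ ≤ (#T).choose a * (#U - a).choose (f - a) * #U ^ a :=
          Nat.mul_le_mul_right _ (card_filter_le_card_inter_le_s7 hTU haf)
      _ ≤ (#T).choose a * ((#U).choose f * f ^ a) := by
          rw [Nat.mul_assoc]; exact Nat.mul_le_mul_left _ (Nat.choose_sub_mul_pow_le_s7 haf hfN)
      _ = _ := by ring
  rw [div_pow, div_le_iff₀ htotal, mul_div_assoc', div_mul_eq_mul_div, le_div_iff₀ hN]
  linarith

end Hypergeometric

theorem two_mul_exp_one_mul_lt_of_lt_div_sub_one {c d : ℝ} (hd : 0 ≤ d)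
    (h : 2 * exp 1 - 1 < c / d - 1) : 2 * (exp 1 * d) < c := by
  have hdpos : 0 < d := hd.lt_of_ne fun h0 => by
    rw [← h0, div_zero] at h
    linarith [exp_pos 1]
  rw [← mul_assoc, ← lt_div_iff₀ hdpos]
  linarith

theorem div_ceil_mul_mul_le_half {b c x : ℝ} (hx : 0 ≤ x) (hbc : 2 * b ≤ c) :
    b / ⌈c * x⌉₊ * x ≤ 1 / 2 := by
  rcases Nat.eq_zero_or_pos ⌈c * x⌉₊ with h0 | h0
  · simp [h0]
  have h2 : 2 * (b * x) ≤ ⌈c * x⌉₊ :=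
    calc 2 * (b * x) = 2 * b * x := by ring
      _ ≤ c * x := by gcongr
      _ ≤ ⌈c * x⌉₊ := Nat.le_ceil _
  rw [div_mul_eq_mul_div, div_le_iff₀ (by positivity)]
  linarith

theorem card_filter_mk_mem_eq_card_inter {α β : Type*} [DecidableEq α] [DecidableEq β]
    (F : Finset (α × β)) (D : Finset α) (v : β) :
    #{u ∈ D | (u, v) ∈ F} = #(F ∩ D ×ˢ {v}) := by
  rw [← card_image_of_injective _ (Prod.mk_left_injective v)]
  congr 1
  ext ⟨x, y⟩
  simp only [mem_image, mem_filter, mem_inter, mem_product, mem_singleton, Prod.mk.injEq]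
  constructor
  · rintro ⟨u, ⟨huD, huF⟩, rfl, rfl⟩
    exact ⟨huF, huD, rfl⟩
  · rintro ⟨hF, hxD, rfl⟩
    exact ⟨x, ⟨hxD, hF⟩, rfl, rfl⟩

theorem stmt_7_general {α β γ : Type*} [DecidableEq α] [DecidableEq β] [DecidableEq γ]
    (Vi : Finset α) (Vj : Finset β) (ri rj rk fij fik : ℕ)
    (hri : Vi.card = ri) (hrj : Vj.card = rj)
    (Fik : Finset (α × γ))
    (v : β) (hv : v ∈ Vj) (w : γ)
    (hδ : 11 * (fik : ℝ) / rk / ((Vi.filter (fun u => (u, w) ∈ Fik)).card : ℝ) - 1 >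
        2 * Real.exp 1 - 1) :
    ((((Vi ×ˢ Vj).powersetCard fij).filter (fun F =>
          11 * (fij : ℝ) * fik / (ri * rj * rk) ≤
            ((Vi.filter (fun u => (u, v) ∈ F ∧ (u, w) ∈ Fik)).card : ℝ))).card : ℝ)
        / (((Vi ×ˢ Vj).powersetCard fij).card : ℝ)
      ≤ ((1 : ℝ) / 2) ^ (11 * (fij : ℝ) * fik / (ri * rj * rk)) := by
  set D := Vi.filter (fun u => (u, w) ∈ Fik)
  set x : ℝ := fij / #(Vi ×ˢ Vj) with hx
  have ht : 11 * (fij : ℝ) * fik / (ri * rj * rk) = 11 * fik / rk * x := by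
    rw [hx, card_product, hri, hrj]; push_cast; ring
  rw [ht]
  set a := ⌈11 * fik / rk * x⌉₊
  have hTU : D ×ˢ {v} ⊆ Vi ×ˢ Vj :=
    product_subset_product (filter_subset _ _) (singleton_subset_iff.2 hv)
  have hbad : {F ∈ (Vi ×ˢ Vj).powersetCard fij |
      11 * fik / rk * x ≤ (#(Vi.filter fun u => (u, v) ∈ F ∧ (u, w) ∈ Fik) : ℝ)}
        = {F ∈ (Vi ×ˢ Vj).powersetCard fij | a ≤ #(F ∩ D ×ˢ {v})} := by
    refine filter_congr fun F _ => ?_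
    simp_rw [a, ← Nat.ceil_le, ← card_filter_mk_mem_eq_card_inter, D, filter_filter, and_comm]
  calc _ = (#{F ∈ (Vi ×ˢ Vj).powersetCard fij | a ≤ #(F ∩ D ×ˢ {v})} : ℝ)
        / #((Vi ×ˢ Vj).powersetCard fij) := by rw [hbad]
    _ ≤ (#(D ×ˢ {v})).choose a * x ^ a := card_filter_le_card_inter_div_le hTU
    _ ≤ (exp 1 * #D / a) ^ a * x ^ a := by
        rw [card_product, card_singleton, mul_one]
        gcongr
        exact Nat.choose_le_exp_mul_div_pow _ _
    _ = (exp 1 * #D / a * x) ^ a := (mul_pow ..).symm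
    _ ≤ (1 / 2) ^ a := by
        gcongr
        exact div_ceil_mul_mul_le_half (by positivity)
          (two_mul_exp_one_mul_lt_of_lt_div_sub_one (Nat.cast_nonneg _) hδ).le
    _ ≤ (1 / 2) ^ (11 * fik / rk * x) := by
        rw [← rpow_natCast]
        exact rpow_le_rpow_of_exponent_ge (by norm_num) (by norm_num) (Nat.le_ceil _)

/-- Given a fixed `F_ik ⊆ V_i × V_k` in which every `w ∈ V_k` has degree at most
`2 f_ik / r_k`, a uniformly random `f_ij`-element subset `F` of `V_i × V_j`, and a
fixed pair `(v,w) ∈ V_j × V_k`, the probability that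
`|{u ∈ V_i : (u,v) ∈ F and (u,w) ∈ F_ik}| ≥ 11 f_ij f_ik / (r_i r_j r_k)` is at
most `(1/2)^(11 f_ij f_ik / (r_i r_j r_k))`, provided
`(11 f_ik / r_k) / |{u : (u,w) ∈ F_ik}| - 1 > 2e - 1`. -/
theorem stmt_7 {α β γ : Type*} [DecidableEq α] [DecidableEq β] [DecidableEq γ]
    (Vi : Finset α) (Vj : Finset β) (Vk : Finset γ) (ri rj rk fij fik : ℕ)
    (hri : Vi.card = ri) (hrj : Vj.card = rj) (hrk : Vk.card = rk)
    (hfij1 : 1 ≤ fij) (hfij2 : fij ≤ ri * rj) (hfik : 1 ≤ fik)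
    (Fik : Finset (α × γ)) (hFik : Fik ⊆ Vi ×ˢ Vk)
    (hdeg : ∀ w ∈ Vk, ((Vi.filter (fun u => (u, w) ∈ Fik)).card : ℝ) ≤ 2 * fik / rk)
    (v : β) (hv : v ∈ Vj) (w : γ) (hw : w ∈ Vk)
    (hδ : 11 * (fik : ℝ) / rk / ((Vi.filter (fun u => (u, w) ∈ Fik)).card : ℝ) - 1 >
        2 * Real.exp 1 - 1) :
    ((((Vi ×ˢ Vj).powersetCard fij).filter (fun F =>
          11 * (fij : ℝ) * fik / (ri * rj * rk) ≤
            ((Vi.filter (fun u => (u, v) ∈ F ∧ (u, w) ∈ Fik)).card : ℝ))).card : ℝ)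
        / (((Vi ×ˢ Vj).powersetCard fij).card : ℝ)
      ≤ ((1 : ℝ) / 2) ^ (11 * (fij : ℝ) * fik / (ri * rj * rk)) :=
  stmt_7_general Vi Vj ri rj rk fij fik hri hrj Fik v hv w hδ
end

section
/- Let V_i, V_j, V_k be finite sets with sizes r_i, r_j, r_k, fix u ∈ V_i and v ∈ V_j, and let F_ik ⊆ V_i × V_k and F_jk ⊆ V_j × V_k be independent uniformly random subsets of sizes f_ik and f_jk. Define A = {w ∈ V_k : (u,w) ∈ F_ik and (v,w) ∈ F_jk}. Then Pr[ |A| > 11·f_ik·f_jk/(r_i·r_j·r_k) ] ≤ 2^(−11·f_ik·f_jk/(r_i·r_j·r_k)) + exp(−f_ik/(3·r_i)). -/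
/-!
Put `t = 11 f_ik f_jk / (r_i r_j r_k)` and `s = ⌊t⌋ + 1`, so `|A| > t` means that `A` contains
some `s`-subset `S ⊆ V_k`. For fixed `S`, the random sets contain `{u} × S` and `{v} × S`
independently, with probabilities at most `(f_ik / (r_i r_k))^s` and `(f_jk / (r_j r_k))^s`.
A union bound over the `C(r_k, s) ≤ r_k^s / s!` choices of `S` gives the bound `(t/11)^s / s!`,
and `s^s / s! ≤ e^s` turns this into `(e/11)^s ≤ 2^(-s) ≤ 2^(-t)`.
-/

open Finset
open scoped Classical

theorem Nat.choose_mul_add_one_add_le {n k : ℕ} (hkn : k ≤ n) (m : ℕ) :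
    n.choose k * (n + 1 + m) ≤ (n + 1).choose (k + 1) * (k + 1 + m) := by
  refine Nat.le_of_mul_le_mul_right ?_ k.succ_pos
  calc n.choose k * (n + 1 + m) * (k + 1)
      = n.choose k * ((n + 1 + m) * (k + 1)) := by ring
    _ ≤ n.choose k * ((n + 1) * (k + 1 + m)) := Nat.mul_le_mul_left _ (by nlinarith)
    _ = (n + 1) * n.choose k * (k + 1 + m) := by ring
    _ = (n + 1).choose (k + 1) * (k + 1 + m) * (k + 1) := by
      rw [Nat.add_one_mul_choose_eq]; ring

theorem Nat.choose_mul_add_pow_le (s : ℕ) {n k : ℕ} (hkn : k ≤ n) :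
    n.choose k * (n + s) ^ s ≤ (n + s).choose (k + s) * (k + s) ^ s := by
  induction s generalizing n k with
  | zero => simp
  | succ s ih =>
    calc n.choose k * (n + (s + 1)) ^ (s + 1)
        = n.choose k * (n + 1 + s) * (n + 1 + s) ^ s := by ring
      _ ≤ (n + 1).choose (k + 1) * (k + 1 + s) * (n + 1 + s) ^ s :=
        Nat.mul_le_mul_right _ (Nat.choose_mul_add_one_add_le hkn s)
      _ = (k + 1 + s) * ((n + 1).choose (k + 1) * (n + 1 + s) ^ s) := by ring
      _ ≤ (k + 1 + s) * ((n + 1 + s).choose (k + 1 + s) * (k + 1 + s) ^ s) :=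
        Nat.mul_le_mul_left _ (ih (by omega))
      _ = (n + (s + 1)).choose (k + (s + 1)) * (k + (s + 1)) ^ (s + 1) := by
        rw [show n + 1 + s = n + (s + 1) by omega, show k + 1 + s = k + (s + 1) by omega]; ring

theorem Finset.card_filter_powersetCard_subset_le {δ : Type*} [DecidableEq δ]
    (T U : Finset δ) (f : ℕ) :
    (#{F ∈ U.powersetCard f | T ⊆ F} : ℝ) ≤ (#U).choose f * ((f : ℝ) / #U) ^ #T := by
  by_cases h : T ⊆ U ∧ #T ≤ f ∧ f ≤ #U
  swap
  · have hempty : {F ∈ U.powersetCard f | T ⊆ F} = ∅ := filter_eq_empty_iff.2 fun F hF hTF => by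
      rw [mem_powersetCard] at hF
      exact h ⟨hTF.trans hF.1, hF.2 ▸ card_le_card hTF, hF.2 ▸ card_le_card hF.1⟩
    rw [hempty, card_empty, Nat.cast_zero]
    positivity
  obtain ⟨hTU, hTf, hfU⟩ := h
  have hpos : (0 : ℝ) < (#U : ℝ) ^ #T := by
    exact_mod_cast Nat.pow_pos_iff.mpr (by omega)
  rw [card_filter_powersetCard_subset T U f hTU hTf, div_pow, mul_div_assoc', le_div_iff₀ hpos]
  have hchoose := Nat.choose_mul_add_pow_le #T (n := #U - #T) (k := f - #T) (by omega)
  rw [Nat.sub_add_cancel (card_le_card hTU), Nat.sub_add_cancel hTf] at hchoose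
  exact_mod_cast hchoose

theorem pow_div_factorial_le_two_rpow_neg {t : ℝ} (ht : 0 ≤ t) {s : ℕ} (hts : t ≤ s) :
    (t / 11) ^ s / s.factorial ≤ (2 : ℝ) ^ (-t) := by
  have he : Real.exp 1 / 11 ≤ 1 / 2 := by linarith [Real.exp_one_lt_d9]
  calc (t / 11) ^ s / s.factorial
      ≤ ((s : ℝ) / 11) ^ s / s.factorial := by gcongr
    _ = (s : ℝ) ^ s / s.factorial * (1 / 11) ^ s := by ring
    _ ≤ Real.exp s * (1 / 11) ^ s := by
      gcongr
      exact Real.pow_div_factorial_le_exp _ s.cast_nonneg s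
    _ = (Real.exp 1 / 11) ^ s := by rw [← Real.exp_one_pow]; ring
    _ ≤ (1 / 2) ^ s := by gcongr
    _ = (2 : ℝ) ^ (-(s : ℝ)) := by
      rw [Real.rpow_neg zero_le_two, Real.rpow_natCast, one_div, inv_pow]
    _ ≤ (2 : ℝ) ^ (-t) := Real.rpow_le_rpow_of_exponent_le one_le_two (neg_le_neg hts)

theorem Finset.singleton_product_subset_iff {α β : Type*} {a : α} {S : Finset β}
    {F : Finset (α × β)} : {a} ×ˢ S ⊆ F ↔ ∀ b ∈ S, (a, b) ∈ F := by
  simp [subset_iff]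

section CommonNeighbors

variable {α β γ : Type*} [DecidableEq α] [DecidableEq β] [DecidableEq γ]

def commonNeighbors (W : Finset γ) (u : α) (v : β) (F : Finset (α × γ)) (G : Finset (β × γ)) :
    Finset γ :=
  {w ∈ W | (u, w) ∈ F ∧ (v, w) ∈ G}

theorem card_filter_le_card_commonNeighbors_le_sum (W : Finset γ) (u : α) (v : β)
    (𝓕 : Finset (Finset (α × γ))) (𝓖 : Finset (Finset (β × γ))) (s : ℕ) :
    #{FG ∈ 𝓕 ×ˢ 𝓖 | s ≤ #(commonNeighbors W u v FG.1 FG.2)} ≤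
      ∑ S ∈ W.powersetCard s, #{F ∈ 𝓕 | {u} ×ˢ S ⊆ F} * #{G ∈ 𝓖 | {v} ×ˢ S ⊆ G} := by
  calc _ ≤ #((W.powersetCard s).biUnion fun S =>
          {F ∈ 𝓕 | {u} ×ˢ S ⊆ F} ×ˢ {G ∈ 𝓖 | {v} ×ˢ S ⊆ G}) := by
        refine card_le_card fun FG hFG => ?_
        rw [mem_filter, mem_product] at hFG
        obtain ⟨S, hS, hScard⟩ := exists_subset_card_eq hFG.2
        have hSW : S ⊆ W := hS.trans (filter_subset _ _)
        have hSF : ∀ w ∈ S, (u, w) ∈ FG.1 ∧ (v, w) ∈ FG.2 := fun w hw => (mem_filter.1 (hS hw)).2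
        simp only [mem_biUnion, mem_product, mem_filter, mem_powersetCard]
        exact ⟨S, ⟨hSW, hScard⟩, ⟨hFG.1.1, singleton_product_subset_iff.2 fun w hw => (hSF w hw).1⟩,
          hFG.1.2, singleton_product_subset_iff.2 fun w hw => (hSF w hw).2⟩
    _ ≤ _ := card_biUnion_le.trans_eq (sum_congr rfl fun _ _ => card_product _ _)

theorem card_filter_le_card_commonNeighbors_le (Vi : Finset α) (Vj : Finset β) (Vk : Finset γ)
    (u : α) (v : β) (fik fjk s : ℕ) :
    (#{FG ∈ (Vi ×ˢ Vk).powersetCard fik ×ˢ (Vj ×ˢ Vk).powersetCard fjk |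
        s ≤ #(commonNeighbors Vk u v FG.1 FG.2)} : ℝ) ≤
      #((Vi ×ˢ Vk).powersetCard fik ×ˢ (Vj ×ˢ Vk).powersetCard fjk) *
        (((fik : ℝ) * fjk / (#Vi * #Vj * #Vk)) ^ s / s.factorial) := by
  set pik : ℝ := fik / #(Vi ×ˢ Vk)
  set pjk : ℝ := fjk / #(Vj ×ˢ Vk)
  have hsum := card_filter_le_card_commonNeighbors_le_sum Vk u v
    ((Vi ×ˢ Vk).powersetCard fik) ((Vj ×ˢ Vk).powersetCard fjk) s
  have hprob : (#Vk : ℝ) * pik * pjk = fik * fjk / (#Vi * #Vj * #Vk) := by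
    simp only [pik, pjk, card_product, Nat.cast_mul]
    rcases eq_or_ne (#Vk : ℝ) 0 with h | h
    · simp [h]
    · field_simp
  calc _ ≤ ∑ S ∈ Vk.powersetCard s, ((#(Vi ×ˢ Vk)).choose fik * pik ^ s) *
        ((#(Vj ×ˢ Vk)).choose fjk * pjk ^ s) := by
        refine (Nat.cast_le.2 hsum).trans ?_
        push_cast
        refine sum_le_sum fun S hS => ?_
        have hS : #({u} ×ˢ S) = s ∧ #({v} ×ˢ S) = s := by
          simp only [card_product, card_singleton, one_mul, (mem_powersetCard.1 hS).2, and_self]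
        refine mul_le_mul ?_ ?_ (by positivity) (by positivity)
        · exact hS.1 ▸ card_filter_powersetCard_subset_le _ _ _
        · exact hS.2 ▸ card_filter_powersetCard_subset_le _ _ _
    _ ≤ (#Vk : ℝ) ^ s / s.factorial * (((#(Vi ×ˢ Vk)).choose fik * pik ^ s) *
        ((#(Vj ×ˢ Vk)).choose fjk * pjk ^ s)) := by
        rw [sum_const, card_powersetCard, nsmul_eq_mul]
        gcongr
        exact Nat.choose_le_pow_div s #Vk
    _ = _ := by
        rw [card_product ((Vi ×ˢ Vk).powersetCard fik), card_powersetCard, card_powersetCard,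
          ← hprob]
        push_cast
        ring

end CommonNeighbors

theorem stmt_9_general {α β γ : Type*} [DecidableEq α] [DecidableEq β] [DecidableEq γ]
    (Vi : Finset α) (Vj : Finset β) (Vk : Finset γ) (ri rj rk fik fjk : ℕ)
    (hri : Vi.card = ri) (hrj : Vj.card = rj) (hrk : Vk.card = rk)
    (u : α) (v : β) :
    (((((Vi ×ˢ Vk).powersetCard fik) ×ˢ ((Vj ×ˢ Vk).powersetCard fjk)).filter (fun FF =>
          11 * (fik : ℝ) * fjk / ((ri : ℝ) * rj * rk) <
            ((Vk.filter (fun w => (u, w) ∈ FF.1 ∧ (v, w) ∈ FF.2)).card : ℝ))).card : ℝ)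
        / ((((Vi ×ˢ Vk).powersetCard fik) ×ˢ ((Vj ×ˢ Vk).powersetCard fjk)).card : ℝ)
      ≤ (2 : ℝ) ^ (-(11 * (fik : ℝ) * fjk / ((ri : ℝ) * rj * rk))) +
          Real.exp (-(fik : ℝ) / (3 * ri)) := by
  subst hri hrj hrk
  set t : ℝ := 11 * (fik : ℝ) * fjk / (#Vi * #Vj * #Vk)
  have ht : 0 ≤ t := by positivity
  set s := ⌊t⌋₊ + 1
  have hevent : ∀ n : ℕ, t < n ↔ s ≤ n := fun n =>
    (Nat.floor_lt ht).symm.trans Nat.succ_le_iff.symm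
  refine le_add_of_le_of_nonneg (div_le_of_le_mul₀ (by positivity) (by positivity) ?_)
    (Real.exp_pos _).le
  simp only [hevent]
  calc _ ≤ _ := card_filter_le_card_commonNeighbors_le Vi Vj Vk u v fik fjk s
    _ = #((Vi ×ˢ Vk).powersetCard fik ×ˢ (Vj ×ˢ Vk).powersetCard fjk) *
          ((t / 11) ^ s / s.factorial) := by ring
    _ ≤ _ := by
      rw [mul_comm]
      gcongr
      exact pow_div_factorial_le_two_rpow_neg ht (by simpa [s] using (Nat.lt_floor_add_one t).le)

/-- For independent uniformly random subsets `F_ik ⊆ V_i × V_k` and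
`F_jk ⊆ V_j × V_k` of sizes `f_ik` and `f_jk`, and fixed `u ∈ V_i`, `v ∈ V_j`, the
set `A = {w ∈ V_k : (u,w) ∈ F_ik and (v,w) ∈ F_jk}` satisfies
`Pr[|A| > 11 f_ik f_jk/(r_i r_j r_k)] ≤ 2^(-11 f_ik f_jk/(r_i r_j r_k)) + exp(-f_ik/(3 r_i))`. -/
theorem stmt_9 {α β γ : Type*} [DecidableEq α] [DecidableEq β] [DecidableEq γ]
    (Vi : Finset α) (Vj : Finset β) (Vk : Finset γ) (ri rj rk fik fjk : ℕ)
    (hri : Vi.card = ri) (hrj : Vj.card = rj) (hrk : Vk.card = rk)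
    (hfik1 : 1 ≤ fik) (hfik2 : fik ≤ ri * rk)
    (hfjk1 : 1 ≤ fjk) (hfjk2 : fjk ≤ rj * rk)
    (u : α) (hu : u ∈ Vi) (v : β) (hv : v ∈ Vj) :
    (((((Vi ×ˢ Vk).powersetCard fik) ×ˢ ((Vj ×ˢ Vk).powersetCard fjk)).filter (fun FF =>
          11 * (fik : ℝ) * fjk / ((ri : ℝ) * rj * rk) <
            ((Vk.filter (fun w => (u, w) ∈ FF.1 ∧ (v, w) ∈ FF.2)).card : ℝ))).card : ℝ)
        / ((((Vi ×ˢ Vk).powersetCard fik) ×ˢ ((Vj ×ˢ Vk).powersetCard fjk)).card : ℝ)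
      ≤ (2 : ℝ) ^ (-(11 * (fik : ℝ) * fjk / ((ri : ℝ) * rj * rk))) +
          Real.exp (-(fik : ℝ) / (3 * ri)) :=
  stmt_9_general Vi Vj Vk ri rj rk fik fjk hri hrj hrk u v
end

section
/- Let V_i, V_j, V_k be finite sets of sizes r_i, r_j, r_k, and let F_ij, F_ik, F_jk be uniformly random subsets of V_i×V_j, V_i×V_k, V_j×V_k of sizes f_ij, f_ik, f_jk, chosen independently. Fix u, u' ∈ V_i with u ≠ u', and v, v' ∈ V_j. Let Γ and Γ' be the triple sets induced by (F_ij, F_ik, F_jk) and by ((F_ij \ {(u,v)}) ∪ {(u',v')}, F_ik, F_jk) respectively, where Γ(F) = {(a,b,c) : (a,b) ∈ F, (a,c) ∈ F_ik, (b,c) ∈ F_jk}. Then Pr[ |Γ Δ Γ'| ≥ 22·f_ik·f_jk/(r_i·r_j·r_k) ] ≤ 2·( 2^(−11·f_ik·f_jk/(r_i·r_j·r_k)) + exp(−f_ik/(3·r_i)) ). -/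
/-!
Replacing the pair `(u, v)` of `F_ij` by `(u', v')` only changes triples lying over these two
pairs, so `|Γ Δ Γ'|` is at most `|W(u, v)| + |W(u', v')|`, where `W(a, b)` is the common
neighbourhood of `a` and `b` in `V_k`. Hence if `|Γ Δ Γ'| ≥ 22 μ`, with
`μ = f_ik f_jk / (r_i r_j r_k)`, one of the two common neighbourhoods has at least
`t = ⌈11 μ⌉` elements. A fixed `t`-set `S ⊆ V_k` lies in `W(a, b)` with probability at most
`(f_ik / (r_i r_k))^t (f_jk / (r_j r_k))^t`, and the union bound over the `C(r_k, t) ≤ r_k^t / t!`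
choices of `S` gives `μ^t / t! ≤ (e / 11)^t ≤ 2^(-t)`.
-/

open Finset
open scoped symmDiff Classical

/-- The triple set induced by `(F_ij, F_ik, F_jk)` inside `V_i × V_j × V_k`. -/
def tripleSet {α β γ : Type*} [DecidableEq α] [DecidableEq β] [DecidableEq γ]
    (Vi : Finset α) (Vj : Finset β) (Vk : Finset γ)
    (Fij : Finset (α × β)) (Fik : Finset (α × γ)) (Fjk : Finset (β × γ)) :
    Finset (α × β × γ) :=
  (Vi ×ˢ Vj ×ˢ Vk).filter (fun x =>
    (x.1, x.2.1) ∈ Fij ∧ (x.1, x.2.2) ∈ Fik ∧ (x.2.1, x.2.2) ∈ Fjk)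

namespace Nat

theorem descFactorial_mul_pow_le_pow_mul_descFactorial {m N : ℕ} (h : m ≤ N) :
    ∀ t : ℕ, m.descFactorial t * N ^ t ≤ m ^ t * N.descFactorial t
  | 0 => by simp
  | t + 1 => by
    have step : (m - t) * N ≤ m * (N - t) := by
      rw [Nat.sub_mul, Nat.mul_sub, Nat.mul_comm t N]
      exact Nat.sub_le_sub_left (Nat.mul_le_mul_right t h) _
    calc m.descFactorial (t + 1) * N ^ (t + 1)
        = ((m - t) * N) * (m.descFactorial t * N ^ t) := by
          rw [descFactorial_succ, pow_succ]; ring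
      _ ≤ (m * (N - t)) * (m ^ t * N.descFactorial t) :=
          Nat.mul_le_mul step (descFactorial_mul_pow_le_pow_mul_descFactorial h t)
      _ = m ^ (t + 1) * N.descFactorial (t + 1) := by
          rw [descFactorial_succ, pow_succ]; ring

theorem choose_sub_mul_pow_le_pow_mul_choose {t m N : ℕ} (htm : t ≤ m) (hmN : m ≤ N) :
    (N - t).choose (m - t) * N ^ t ≤ m ^ t * N.choose m := by
  have hchoose : (N - t).choose (m - t) * N.descFactorial t = N.choose m * m.descFactorial t := by
    simp only [descFactorial_eq_factorial_mul_choose]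
    linear_combination (t.factorial : ℕ) * (choose_mul (n := N) htm).symm
  refine Nat.le_of_mul_le_mul_right ?_ (descFactorial_pos.mpr (htm.trans hmN))
  calc (N - t).choose (m - t) * N ^ t * N.descFactorial t
      = N.choose m * (m.descFactorial t * N ^ t) := by rw [mul_right_comm, hchoose, mul_assoc]
    _ ≤ N.choose m * (m ^ t * N.descFactorial t) :=
        Nat.mul_le_mul_left _ (descFactorial_mul_pow_le_pow_mul_descFactorial hmN t)
    _ = m ^ t * N.choose m * N.descFactorial t := by ring

end Nat

theorem Finset.card_filter_powersetCard_subset_mul_pow_le {ι : Type*} [DecidableEq ι]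
    (U T : Finset ι) (m : ℕ) :
    #{F ∈ U.powersetCard m | T ⊆ F} * #U ^ #T ≤ m ^ #T * #(U.powersetCard m) := by
  by_cases h : T ⊆ U ∧ #T ≤ m ∧ m ≤ #U
  · obtain ⟨hTU, hTm, hmU⟩ := h
    rw [card_filter_powersetCard_subset T U m hTU hTm, card_powersetCard]
    exact Nat.choose_sub_mul_pow_le_pow_mul_choose hTm hmU
  · suffices {F ∈ U.powersetCard m | T ⊆ F} = ∅ by simp [this]
    refine filter_eq_empty_iff.mpr fun F hF hTF => h ?_
    obtain ⟨hFU, rfl⟩ := mem_powersetCard.mp hF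
    exact ⟨hTF.trans hFU, card_le_card hTF, card_le_card hFU⟩

theorem Finset.card_filter_powersetCard_image_mk_subset_mul_pow_le {δ ε : Type*}
    [DecidableEq δ] [DecidableEq ε] (U : Finset (δ × ε)) (S : Finset ε) (a : δ) (m : ℕ) :
    #{F ∈ U.powersetCard m | S.image (Prod.mk a) ⊆ F} * #U ^ #S ≤
      m ^ #S * #(U.powersetCard m) := by
  simpa only [card_image_of_injective _ (Prod.mk_right_injective a)] using
    card_filter_powersetCard_subset_mul_pow_le U (S.image (Prod.mk a)) m

theorem pow_div_factorial_le_half_pow {μ : ℝ} {t : ℕ} (hμ : 0 ≤ μ) (ht : 11 * μ ≤ t) :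
    μ ^ t / t.factorial ≤ (1 / 2) ^ t := by
  calc μ ^ t / t.factorial ≤ ((t : ℝ) / 11) ^ t / t.factorial := by gcongr; linarith
    _ = (t : ℝ) ^ t / t.factorial / 11 ^ t := by rw [div_pow]; ring
    _ ≤ Real.exp t / 11 ^ t := by gcongr; exact Real.pow_div_factorial_le_exp _ t.cast_nonneg t
    _ = (Real.exp 1 / 11) ^ t := by rw [div_pow, Real.exp_one_pow]
    _ ≤ (1 / 2) ^ t :=
        pow_le_pow_left₀ (by positivity) (by linarith [Real.exp_one_lt_d9]) t

section

variable {α β γ : Type*} [DecidableEq α] [DecidableEq β] [DecidableEq γ]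

def commonNbhd (Vk : Finset γ) (Fik : Finset (α × γ)) (Fjk : Finset (β × γ)) (a : α) (b : β) :
    Finset γ :=
  {c ∈ Vk | (a, c) ∈ Fik ∧ (b, c) ∈ Fjk}

variable (Vi : Finset α) (Vj : Finset β) (Vk : Finset γ)

section

variable (Fik : Finset (α × γ)) (Fjk : Finset (β × γ))

theorem tripleSet_symmDiff_subset (F F' : Finset (α × β)) :
    tripleSet Vi Vj Vk F Fik Fjk ∆ tripleSet Vi Vj Vk F' Fik Fjk ⊆
      (F ∆ F').biUnion fun p => (commonNbhd Vk Fik Fjk p.1 p.2).image fun c => (p.1, p.2, c) := by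
  rintro ⟨a, b, c⟩ hx
  simp only [tripleSet, commonNbhd, mem_symmDiff, mem_filter, mem_product, mem_biUnion,
    mem_image] at hx ⊢
  exact ⟨(a, b), by tauto, c, by tauto, rfl⟩

theorem card_tripleSet_symmDiff_le (F F' : Finset (α × β)) :
    #(tripleSet Vi Vj Vk F Fik Fjk ∆ tripleSet Vi Vj Vk F' Fik Fjk) ≤
      ∑ p ∈ F ∆ F', #(commonNbhd Vk Fik Fjk p.1 p.2) :=
  (card_le_card (tripleSet_symmDiff_subset Vi Vj Vk Fik Fjk F F')).trans <|
    card_biUnion_le.trans <| sum_le_sum fun _ _ => card_image_le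

theorem card_tripleSet_symmDiff_insert_erase_le (F : Finset (α × β)) (p q : α × β) :
    #(tripleSet Vi Vj Vk F Fik Fjk ∆ tripleSet Vi Vj Vk (insert q (F.erase p)) Fik Fjk) ≤
      #(commonNbhd Vk Fik Fjk p.1 p.2) + #(commonNbhd Vk Fik Fjk q.1 q.2) := by
  have hsub : F ∆ insert q (F.erase p) ⊆ {p, q} := by
    intro x hx
    simp only [mem_symmDiff, mem_insert, mem_erase, mem_singleton] at hx ⊢
    tauto
  refine (card_tripleSet_symmDiff_le Vi Vj Vk Fik Fjk _ _).trans <|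
    (sum_le_sum_of_subset hsub).trans ?_
  by_cases hpq : p = q
  · simp [hpq]
  · rw [sum_pair hpq]

theorem ceil_le_card_commonNbhd_of_two_mul_le_card_symmDiff (F : Finset (α × β)) (p q : α × β)
    {x : ℝ} (hx : 2 * x ≤
      #(tripleSet Vi Vj Vk F Fik Fjk ∆ tripleSet Vi Vj Vk (insert q (F.erase p)) Fik Fjk)) :
    ⌈x⌉₊ ≤ #(commonNbhd Vk Fik Fjk p.1 p.2) ∨ ⌈x⌉₊ ≤ #(commonNbhd Vk Fik Fjk q.1 q.2) := by
  by_contra! hsmall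
  have hsum : (#(tripleSet Vi Vj Vk F Fik Fjk ∆
        tripleSet Vi Vj Vk (insert q (F.erase p)) Fik Fjk) : ℝ) ≤
      #(commonNbhd Vk Fik Fjk p.1 p.2) + #(commonNbhd Vk Fik Fjk q.1 q.2) := by
    exact_mod_cast card_tripleSet_symmDiff_insert_erase_le Vi Vj Vk Fik Fjk F p q
  linarith [Nat.lt_ceil.mp hsmall.1, Nat.lt_ceil.mp hsmall.2]

end

theorem card_filter_le_card_commonNbhd_mul_pow_le (U₁ : Finset (α × γ)) (U₂ : Finset (β × γ))
    (m₁ m₂ t : ℕ) (a : α) (b : β) :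
    #{p ∈ U₁.powersetCard m₁ ×ˢ U₂.powersetCard m₂ | t ≤ #(commonNbhd Vk p.1 p.2 a b)} *
        (#U₁ ^ t * #U₂ ^ t) ≤
      (#Vk).choose t * (m₁ ^ t * #(U₁.powersetCard m₁)) * (m₂ ^ t * #(U₂.powersetCard m₂)) := by
  set X : Finset γ → Finset (Finset (α × γ)) := fun S =>
    {F ∈ U₁.powersetCard m₁ | S.image (Prod.mk a) ⊆ F}
  set Y : Finset γ → Finset (Finset (β × γ)) := fun S =>
    {G ∈ U₂.powersetCard m₂ | S.image (Prod.mk b) ⊆ G}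
  have hcover :
      {p ∈ U₁.powersetCard m₁ ×ˢ U₂.powersetCard m₂ | t ≤ #(commonNbhd Vk p.1 p.2 a b)} ⊆
        (Vk.powersetCard t).biUnion fun S => X S ×ˢ Y S := by
    rintro ⟨F, G⟩ hp
    obtain ⟨hFG, ht⟩ := mem_filter.mp hp
    obtain ⟨S, hS, hSt⟩ := exists_subset_card_eq ht
    have hSW : ∀ c ∈ S, c ∈ Vk ∧ (a, c) ∈ F ∧ (b, c) ∈ G := fun c hc => by
      simpa [commonNbhd] using hS hc
    rw [mem_product] at hFG
    simp only [mem_biUnion, mem_product, mem_filter, X, Y, image_subset_iff]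
    exact ⟨S, mem_powersetCard.mpr ⟨fun c hc => (hSW c hc).1, hSt⟩,
      ⟨hFG.1, fun c hc => (hSW c hc).2.1⟩, ⟨hFG.2, fun c hc => (hSW c hc).2.2⟩⟩
  have hX : ∀ S ∈ Vk.powersetCard t, #(X S) * #U₁ ^ t ≤ m₁ ^ t * #(U₁.powersetCard m₁) :=
    fun S hS => (mem_powersetCard.mp hS).2 ▸
      card_filter_powersetCard_image_mk_subset_mul_pow_le U₁ S a m₁
  have hY : ∀ S ∈ Vk.powersetCard t, #(Y S) * #U₂ ^ t ≤ m₂ ^ t * #(U₂.powersetCard m₂) :=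
    fun S hS => (mem_powersetCard.mp hS).2 ▸
      card_filter_powersetCard_image_mk_subset_mul_pow_le U₂ S b m₂
  calc _ ≤ (∑ S ∈ Vk.powersetCard t, #(X S ×ˢ Y S)) * (#U₁ ^ t * #U₂ ^ t) :=
        Nat.mul_le_mul_right _ ((card_le_card hcover).trans card_biUnion_le)
    _ = ∑ S ∈ Vk.powersetCard t, #(X S) * #U₁ ^ t * (#(Y S) * #U₂ ^ t) := by
        rw [sum_mul]; exact sum_congr rfl fun S _ => by rw [card_product]; ring
    _ ≤ ∑ _S ∈ Vk.powersetCard t,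
          m₁ ^ t * #(U₁.powersetCard m₁) * (m₂ ^ t * #(U₂.powersetCard m₂)) :=
        sum_le_sum fun S hS => Nat.mul_le_mul (hX S hS) (hY S hS)
    _ = _ := by rw [sum_const, card_powersetCard, smul_eq_mul]; ring

theorem card_filter_le_card_commonNbhd_le (hVi : 0 < #Vi) (hVj : 0 < #Vj) (hVk : 0 < #Vk)
    (fik fjk t : ℕ) (a : α) (b : β) :
    (#{p ∈ (Vi ×ˢ Vk).powersetCard fik ×ˢ (Vj ×ˢ Vk).powersetCard fjk |
        t ≤ #(commonNbhd Vk p.1 p.2 a b)} : ℝ) ≤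
      ((fik : ℝ) * fjk / (#Vi * #Vj * #Vk)) ^ t / t.factorial *
        #((Vi ×ˢ Vk).powersetCard fik ×ˢ (Vj ×ˢ Vk).powersetCard fjk) := by
  have hcount : (#{p ∈ (Vi ×ˢ Vk).powersetCard fik ×ˢ (Vj ×ˢ Vk).powersetCard fjk |
        t ≤ #(commonNbhd Vk p.1 p.2 a b)} : ℝ) * ((#Vi * #Vk) ^ t * (#Vj * #Vk) ^ t) ≤
      (#Vk).choose t * (fik ^ t * #((Vi ×ˢ Vk).powersetCard fik)) *
        (fjk ^ t * #((Vj ×ˢ Vk).powersetCard fjk)) := by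
    exact_mod_cast card_product Vi Vk ▸ card_product Vj Vk ▸
      card_filter_le_card_commonNbhd_mul_pow_le Vk (Vi ×ˢ Vk) (Vj ×ˢ Vk) fik fjk t a b
  rw [← le_div_iff₀ (by positivity)] at hcount
  refine hcount.trans ?_
  calc _ ≤ (#Vk : ℝ) ^ t / t.factorial * (fik ^ t * #((Vi ×ˢ Vk).powersetCard fik)) *
        (fjk ^ t * #((Vj ×ˢ Vk).powersetCard fjk)) / ((#Vi * #Vk) ^ t * (#Vj * #Vk) ^ t) := by
        gcongr; exact Nat.choose_le_pow_div t _
    _ = _ := by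
        rw [card_product, div_pow, mul_pow, mul_pow, mul_pow, mul_pow]
        push_cast
        field_simp
        ring

theorem card_filter_ceil_le_card_commonNbhd_le (hVi : 0 < #Vi) (hVj : 0 < #Vj) (hVk : 0 < #Vk)
    (fik fjk : ℕ) (a : α) (b : β) :
    (#{p ∈ (Vi ×ˢ Vk).powersetCard fik ×ˢ (Vj ×ˢ Vk).powersetCard fjk |
        ⌈11 * ((fik : ℝ) * fjk / (#Vi * #Vj * #Vk))⌉₊ ≤ #(commonNbhd Vk p.1 p.2 a b)} : ℝ) ≤
      (2 : ℝ) ^ (-(11 * ((fik : ℝ) * fjk / (#Vi * #Vj * #Vk)))) *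
        #((Vi ×ˢ Vk).powersetCard fik ×ˢ (Vj ×ˢ Vk).powersetCard fjk) := by
  set μ : ℝ := fik * fjk / (#Vi * #Vj * #Vk)
  set t := ⌈11 * μ⌉₊
  refine (card_filter_le_card_commonNbhd_le Vi Vj Vk hVi hVj hVk fik fjk t a b).trans ?_
  gcongr
  calc μ ^ t / t.factorial ≤ (1 / 2) ^ t :=
        pow_div_factorial_le_half_pow (by positivity) (Nat.le_ceil _)
    _ = (2 : ℝ) ^ (-(t : ℝ)) := by
        rw [Real.rpow_neg zero_le_two, Real.rpow_natCast, one_div, inv_pow]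
    _ ≤ (2 : ℝ) ^ (-(11 * μ)) :=
        Real.rpow_le_rpow_of_exponent_le one_le_two (neg_le_neg (Nat.le_ceil _))

end

theorem stmt_14_general {α β γ : Type*} [DecidableEq α] [DecidableEq β] [DecidableEq γ]
    (Vi : Finset α) (Vj : Finset β) (Vk : Finset γ) (ri rj rk fij fik fjk : ℕ)
    (hri : Vi.card = ri) (hrj : Vj.card = rj) (hrk : Vk.card = rk)
    (hri1 : 1 ≤ ri) (hrj1 : 1 ≤ rj) (hrk1 : 1 ≤ rk)
    (u u' : α)
    (v v' : β)
    (P : Finset (Finset (α × β) × Finset (α × γ) × Finset (β × γ)))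
    (hP : P = (((Vi ×ˢ Vj).powersetCard fij).filter
          (fun F => (u, v) ∈ F ∧ (u', v') ∉ F)) ×ˢ
        ((Vi ×ˢ Vk).powersetCard fik) ×ˢ ((Vj ×ˢ Vk).powersetCard fjk)) :
    ((P.filter (fun FFF =>
          22 * (fik : ℝ) * fjk / ((ri : ℝ) * rj * rk) ≤
            (((tripleSet Vi Vj Vk FFF.1 FFF.2.1 FFF.2.2) ∆
                (tripleSet Vi Vj Vk (insert (u', v') (FFF.1.erase (u, v)))
                  FFF.2.1 FFF.2.2)).card : ℝ))).card : ℝ) / (P.card : ℝ)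
      ≤ 2 * ((2 : ℝ) ^ (-(11 * (fik : ℝ) * fjk / ((ri : ℝ) * rj * rk))) +
          Real.exp (-(fik : ℝ) / (3 * ri))) := by
  subst hri hrj hrk hP
  set μ : ℝ := fik * fjk / (#Vi * #Vj * #Vk)
  set A := {F ∈ (Vi ×ˢ Vj).powersetCard fij | (u, v) ∈ F ∧ (u', v') ∉ F}
  set BC := (Vi ×ˢ Vk).powersetCard fik ×ˢ (Vj ×ˢ Vk).powersetCard fjk
  set E : α → β → Finset (Finset (α × γ) × Finset (β × γ)) := fun a b =>
    {p ∈ BC | ⌈11 * μ⌉₊ ≤ #(commonNbhd Vk p.1 p.2 a b)}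
  have hE : ∀ a b, (#(E a b) : ℝ) ≤ 2 ^ (-(11 * μ)) * #BC :=
    card_filter_ceil_le_card_commonNbhd_le Vi Vj Vk hri1 hrj1 hrk1 fik fjk
  rw [show 22 * (fik : ℝ) * fjk / (#Vi * #Vj * #Vk) = 2 * (11 * μ) by ring,
    show 11 * (fik : ℝ) * fjk / (#Vi * #Vj * #Vk) = 11 * μ by ring]
  refine div_le_of_le_mul₀ (by positivity) (by positivity) ?_
  calc _ ≤ (#(A ×ˢ (E u v ∪ E u' v')) : ℝ) := by
        refine Nat.cast_le.mpr (card_le_card fun ⟨F, Fik, Fjk⟩ h => ?_)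
        obtain ⟨hmem, hlarge⟩ := mem_filter.mp h
        obtain ⟨hF, hFF⟩ := mem_product.mp hmem
        refine mem_product.mpr ⟨hF, mem_union.mpr ?_⟩
        simpa only [E, mem_filter, hFF, true_and] using
          ceil_le_card_commonNbhd_of_two_mul_le_card_symmDiff Vi Vj Vk Fik Fjk F _ _ hlarge
    _ ≤ #A * (#(E u v) + #(E u' v')) := by
        rw [card_product]; push_cast; gcongr; exact_mod_cast card_union_le _ _
    _ ≤ #A * (2 ^ (-(11 * μ)) * #BC + 2 ^ (-(11 * μ)) * #BC) := by gcongr <;> apply hE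
    _ = 2 * 2 ^ (-(11 * μ)) * #(A ×ˢ BC) := by rw [card_product A BC]; push_cast; ring
    _ ≤ _ := by gcongr; linarith [Real.exp_pos (-(fik : ℝ) / (3 * #Vi))]

/-- For independent uniformly random subsets `F_ij, F_ik, F_jk` of the product
sets (with `F_ij` conditioned on containing `(u,v)` and not `(u',v')`), the triple
sets `Γ` induced by `(F_ij, F_ik, F_jk)` and `Γ'` induced by
`((F_ij \ {(u,v)}) ∪ {(u',v')}, F_ik, F_jk)` satisfy
`Pr[|Γ Δ Γ'| ≥ 22 f_ik f_jk/(r_i r_j r_k)] ≤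
  2 (2^(-11 f_ik f_jk/(r_i r_j r_k)) + exp(-f_ik/(3 r_i)))`. -/
theorem stmt_14 {α β γ : Type*} [DecidableEq α] [DecidableEq β] [DecidableEq γ]
    (Vi : Finset α) (Vj : Finset β) (Vk : Finset γ) (ri rj rk fij fik fjk : ℕ)
    (hri : Vi.card = ri) (hrj : Vj.card = rj) (hrk : Vk.card = rk)
    (hri1 : 1 ≤ ri) (hrj1 : 1 ≤ rj) (hrk1 : 1 ≤ rk)
    (hfij1 : 1 ≤ fij) (hfij2 : fij ≤ ri * rj)
    (hfik1 : 1 ≤ fik) (hfik2 : fik ≤ ri * rk)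
    (hfjk1 : 1 ≤ fjk) (hfjk2 : fjk ≤ rj * rk)
    (u u' : α) (huu' : u ≠ u') (hu : u ∈ Vi) (hu' : u' ∈ Vi)
    (v v' : β) (hv : v ∈ Vj) (hv' : v' ∈ Vj)
    (P : Finset (Finset (α × β) × Finset (α × γ) × Finset (β × γ)))
    (hP : P = (((Vi ×ˢ Vj).powersetCard fij).filter
          (fun F => (u, v) ∈ F ∧ (u', v') ∉ F)) ×ˢ
        ((Vi ×ˢ Vk).powersetCard fik) ×ˢ ((Vj ×ˢ Vk).powersetCard fjk)) :
    ((P.filter (fun FFF =>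
          22 * (fik : ℝ) * fjk / ((ri : ℝ) * rj * rk) ≤
            (((tripleSet Vi Vj Vk FFF.1 FFF.2.1 FFF.2.2) ∆
                (tripleSet Vi Vj Vk (insert (u', v') (FFF.1.erase (u, v)))
                  FFF.2.1 FFF.2.2)).card : ℝ))).card : ℝ) / (P.card : ℝ)
      ≤ 2 * ((2 : ℝ) ^ (-(11 * (fik : ℝ) * fjk / ((ri : ℝ) * rj * rk))) +
          Real.exp (-(fik : ℝ) / (3 * ri))) :=
  stmt_14_general Vi Vj Vk ri rj rk fij fik fjk hri hrj hrk hri1 hrj1 hrk1 u u' v v' P hP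
end

section
/- Let X be a hypergeometric random variable with distribution HG(N, m, r), and suppose its expectation μ = rm/N satisfies μ ≤ c for some real c > 0. Then for any threshold τ ≥ 11c such that τ/μ − 1 > 2e − 1, Pr[X ≥ τ] ≤ (1/2)^τ. -/
/-!
Writing `μ = r m / N`, each hypergeometric probability is bounded by the Poisson-type term
`μ ^ j / j !`: compare `C(N - m, r - j)` with `C(N - j, r - j)` and use
`C(N, r) C(r, j) = C(N, j) C(N - j, r - j)` and `C(m, j) / C(N, j) ≤ (m / N) ^ j`.
Since `j ^ j ≤ e ^ j j !`, every `j ≥ τ ≥ 11 μ` then gives `μ ^ j / j ! ≤ (e / 11) ^ j ≤ (1 / 4) ^ j`,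
and `∑_{j ≥ τ} 4⁻ʲ ≤ 2^{-τ} ∑_{j ≥ 1} 2⁻ʲ = 2^{-τ}`.
-/

open Finset
open scoped Nat

theorem Nat.descFactorial_mul_pow_le_s18 {m N : ℕ} (h : m ≤ N) (j : ℕ) :
    m.descFactorial j * N ^ j ≤ m ^ j * N.descFactorial j := by
  have hpow (a : ℕ) : a ^ j = ∏ _i ∈ range j, a := by rw [prod_const, card_range]
  rw [descFactorial_eq_prod_range, descFactorial_eq_prod_range, hpow N, hpow m,
    ← prod_mul_distrib, ← prod_mul_distrib]
  refine Finset.prod_le_prod' fun i _ => ?_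
  rw [Nat.sub_mul, Nat.mul_sub]
  exact Nat.sub_le_sub_left (by rw [Nat.mul_comm]; exact Nat.mul_le_mul_left i h) _

theorem Nat.choose_mul_pow_le {m N : ℕ} (h : m ≤ N) (j : ℕ) :
    m.choose j * N ^ j ≤ m ^ j * N.choose j := by
  have := Nat.descFactorial_mul_pow_le_s18 h j
  rw [Nat.descFactorial_eq_factorial_mul_choose, Nat.descFactorial_eq_factorial_mul_choose,
    Nat.mul_assoc, Nat.mul_left_comm _ j !] at this
  exact Nat.le_of_mul_le_mul_left this j.factorial_pos

theorem hypergeometric_term_le {N m r j : ℕ} (hm : m ≤ N) (hr : r ≤ N) (hN : 0 < N)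
    (hj : j ≤ r) :
    (m.choose j : ℝ) * (N - m).choose (r - j) / N.choose r ≤ ((r : ℝ) * m / N) ^ j / j ! := by
  have hNr : (0 : ℝ) < N.choose r := by exact_mod_cast Nat.choose_pos hr
  have hNj : (0 : ℝ) < N.choose j := by exact_mod_cast Nat.choose_pos (hj.trans hr)
  have hsub : m.choose j * (N - m).choose (r - j) ≤ m.choose j * (N - j).choose (r - j) := by
    rcases le_or_gt j m with hjm | hmj
    · exact Nat.mul_le_mul_left _ (Nat.choose_le_choose _ (by omega))
    · simp [Nat.choose_eq_zero_of_lt hmj]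
  have hchoose_mul : (N.choose r : ℝ) * r.choose j = N.choose j * (N - j).choose (r - j) := by
    exact_mod_cast Nat.choose_mul hj
  have hratio : (m.choose j : ℝ) / N.choose j ≤ ((m : ℝ) / N) ^ j := by
    rw [div_pow, div_le_div_iff₀ hNj (by positivity)]
    exact_mod_cast Nat.choose_mul_pow_le hm j
  calc (m.choose j : ℝ) * (N - m).choose (r - j) / N.choose r
      ≤ (m.choose j : ℝ) * (N - j).choose (r - j) / N.choose r :=
        div_le_div_of_nonneg_right (by exact_mod_cast hsub) hNr.le
    _ = r.choose j * ((m.choose j : ℝ) / N.choose j) := by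
        field_simp; linear_combination (m.choose j : ℝ) * hchoose_mul.symm
    _ ≤ (r ^ j / j !) * ((m : ℝ) / N) ^ j :=
        mul_le_mul (Nat.choose_le_pow_div j r) hratio (by positivity) (by positivity)
    _ = ((r : ℝ) * m / N) ^ j / j ! := by rw [mul_div_assoc, mul_pow]; ring

theorem pow_div_factorial_le_quarter_pow {x : ℝ} (hx : 0 ≤ x) {j : ℕ} (hj : 11 * x ≤ j) :
    x ^ j / j ! ≤ (1 / 4) ^ j := by
  have he : Real.exp 1 / 11 ≤ 1 / 4 := by linarith [Real.exp_one_lt_d9]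
  calc x ^ j / j ! ≤ ((j : ℝ) / 11) ^ j / j ! := by gcongr; linarith
    _ = ((j : ℝ) ^ j / j !) / 11 ^ j := by rw [div_pow]; ring
    _ ≤ Real.exp j / 11 ^ j := by gcongr; exact Real.pow_div_factorial_le_exp _ (by positivity) j
    _ = (Real.exp 1 / 11) ^ j := by rw [← Real.exp_one_pow, div_pow]
    _ ≤ (1 / 4) ^ j := by gcongr

theorem sum_quarter_pow_filter_le {τ : ℝ} (hτ : 0 < τ) (n : ℕ) :
    ∑ j ∈ range n with τ ≤ (j : ℕ), ((1 : ℝ) / 4) ^ j ≤ (1 / 2) ^ τ := by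
  have hsub : {j ∈ range n | τ ≤ (j : ℕ)} ⊆ Ico 1 n := by
    intro j hj
    rw [mem_filter, mem_range] at hj
    have : j ≠ 0 := by rintro rfl; norm_num at hj; linarith
    rw [mem_Ico]; omega
  calc ∑ j ∈ range n with τ ≤ (j : ℕ), ((1 : ℝ) / 4) ^ j
      ≤ ∑ j ∈ range n with τ ≤ (j : ℕ), (1 / 2) ^ τ * ((1 : ℝ) / 2) ^ j := by
        gcongr with j hj
        rw [mem_filter] at hj
        have : ((1 : ℝ) / 2) ^ j ≤ (1 / 2) ^ τ := by
          rw [← Real.rpow_natCast]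
          exact Real.rpow_le_rpow_of_exponent_ge (by norm_num) (by norm_num) hj.2
        calc ((1 : ℝ) / 4) ^ j = (1 / 2) ^ j * (1 / 2) ^ j := by rw [← mul_pow]; norm_num
          _ ≤ (1 / 2) ^ τ * (1 / 2) ^ j := by gcongr
    _ = (1 / 2) ^ τ * ∑ j ∈ range n with τ ≤ (j : ℕ), ((1 : ℝ) / 2) ^ j := (mul_sum ..).symm
    _ ≤ (1 / 2) ^ τ * ∑ j ∈ Ico 1 n, ((1 : ℝ) / 2) ^ j := by
        gcongr
    _ ≤ (1 / 2) ^ τ * ((1 / 2) ^ 1 / (1 - 1 / 2)) := by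
        gcongr; exact geom_sum_Ico_le_of_lt_one (by norm_num) (by norm_num)
    _ = (1 / 2) ^ τ := by norm_num

theorem stmt_18_general (N m r : ℕ) (hm : m ≤ N) (hr : r ≤ N) (hN : 0 < N)
    (c τ : ℝ) (hc : 0 < c) (hμc : (r : ℝ) * m / N ≤ c) (hτ : τ ≥ 11 * c) :
    (∑ j ∈ Finset.range (r + 1),
        if τ ≤ (j : ℝ) then
          ((m.choose j : ℝ) * ((N - m).choose (r - j) : ℝ) / (N.choose r : ℝ))
        else 0)
      ≤ ((1 : ℝ) / 2) ^ τ := by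
  rw [← Finset.sum_filter]
  calc _ ≤ ∑ j ∈ range (r + 1) with τ ≤ (j : ℕ), ((1 : ℝ) / 4) ^ j := by
        refine sum_le_sum fun j hj => ?_
        rw [mem_filter, mem_range] at hj
        exact (hypergeometric_term_le hm hr hN (by omega)).trans
          (pow_div_factorial_le_quarter_pow (by positivity) (by linarith [hj.2]))
    _ ≤ _ := sum_quarter_pow_filter_le (by linarith) _

/-- Combined hypergeometric tail bound: if `X ~ HG(N,m,r)` has expectation
`μ = r*m/N ≤ c` and `τ ≥ 11c` satisfies `τ/μ - 1 > 2e - 1`, then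
`Pr[X ≥ τ] ≤ (1/2)^τ`. -/
theorem stmt_18 (N m r : ℕ) (hm : m ≤ N) (hr : r ≤ N) (hN : 0 < N)
    (c τ : ℝ) (hc : 0 < c) (hμc : (r : ℝ) * m / N ≤ c) (hτ : τ ≥ 11 * c)
    (hδ : τ / ((r : ℝ) * m / N) - 1 > 2 * Real.exp 1 - 1) :
    (∑ j ∈ Finset.range (r + 1),
        if τ ≤ (j : ℝ) then
          ((m.choose j : ℝ) * ((N - m).choose (r - j) : ℝ) / (N.choose r : ℝ))
        else 0)
      ≤ ((1 : ℝ) / 2) ^ τ :=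
  stmt_18_general N m r hm hr hN c τ hc hμc hτ
end
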